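/- arXiv:2012.10478 — 9 statements merged into one kernel-verified Lean document; each statement's English description precedes it below -/
import Mathlib

section
/- Let x_1 ≥ x_2 ≥ … ≥ x_r > 0 and y_1 ≥ y_2 ≥ … ≥ y_s > 0 be finite non-increasing sequences of positive real numbers, and let (k_n)_{n∈ℕ} be a sequence of real numbers with k_n ≥ 1 for all n and k_n → ∞. If Σ_{i=1}^r x_i^{k_n} = Σ_{j=1}^s y_j^{k_n} for all n ∈ ℕ, then r = s and x_i = y_i for every i = 1,…,r. -/
open Filter

lemma head_le_aux (r s : ℕ) (hr : 0 < r) (hs : 0 < s)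
    (x : Fin r → ℝ) (y : Fin s → ℝ)
    (hxpos : ∀ i, 0 < x i) (hypos : ∀ j, 0 < y j)
    (hymono : ∀ i j : Fin s, i ≤ j → y j ≤ y i)
    (k : ℕ → ℝ) (hk1 : ∀ n, 1 ≤ k n)
    (hktop : Filter.Tendsto k Filter.atTop Filter.atTop)
    (hsum : ∀ n, ∑ i, (x i) ^ (k n) = ∑ j, (y j) ^ (k n)) :
    x ⟨0, hr⟩ ≤ y ⟨0, hs⟩ := by
  by_contra hlt
  push_neg at hlt
  set a := x ⟨0, hr⟩ with ha
  set b := y ⟨0, hs⟩ with hb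
  have hb0 : 0 < b := hypos _
  have ha0 : 0 < a := hxpos _
  have hab : 1 < a / b := (one_lt_div hb0).2 hlt
  have key : ∀ n, (a / b) ^ (k n) ≤ (s : ℝ) := by
    intro n
    have hkn : 0 ≤ k n := le_trans zero_le_one (hk1 n)
    have h1 : a ^ (k n) ≤ ∑ i, (x i) ^ (k n) := by
      apply Finset.single_le_sum (f := fun i => (x i) ^ (k n))
      · intro i _
        exact Real.rpow_nonneg (hxpos i).le _
      · exact Finset.mem_univ _
    have h2 : ∑ j, (y j) ^ (k n) ≤ (s : ℝ) * b ^ (k n) := by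
      calc ∑ j, (y j) ^ (k n) ≤ ∑ _j : Fin s, b ^ (k n) := by
            apply Finset.sum_le_sum
            intro j _
            exact Real.rpow_le_rpow (hypos j).le (hymono ⟨0, hs⟩ j (by simp [Fin.le_def])) hkn
        _ = (s : ℝ) * b ^ (k n) := by
            rw [Finset.sum_const, Finset.card_univ, Fintype.card_fin, nsmul_eq_mul]
    have h3 : a ^ (k n) ≤ (s : ℝ) * b ^ (k n) := by
      rw [hsum n] at h1; exact h1.trans h2
    have hbpow : 0 < b ^ (k n) := Real.rpow_pos_of_pos hb0 _
    rw [Real.div_rpow ha0.le hb0.le, div_le_iff₀ hbpow]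
    exact h3
  have hbase : Tendsto (fun t : ℝ => (a / b) ^ t) atTop atTop := by
    simp_rw [Real.rpow_def_of_pos (div_pos ha0 hb0)]
    exact Real.tendsto_exp_atTop.comp (Tendsto.const_mul_atTop (Real.log_pos hab) tendsto_id)
  have htend : Tendsto (fun n => (a / b) ^ (k n)) atTop atTop := hbase.comp hktop
  obtain ⟨n, hn⟩ := (htend.eventually_gt_atTop (s : ℝ)).exists
  exact absurd (key n) (not_le.2 hn)

lemma main_aux : ∀ (r s : ℕ) (x : Fin r → ℝ) (y : Fin s → ℝ),
    (∀ i, 0 < x i) → (∀ j, 0 < y j) →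
    (∀ i j : Fin r, i ≤ j → x j ≤ x i) →
    (∀ i j : Fin s, i ≤ j → y j ≤ y i) →
    ∀ (k : ℕ → ℝ), (∀ n, 1 ≤ k n) →
    Filter.Tendsto k Filter.atTop Filter.atTop →
    (∀ n, ∑ i, (x i) ^ (k n) = ∑ j, (y j) ^ (k n)) →
    r = s ∧ ∀ (i : ℕ) (hir : i < r) (his : i < s), x ⟨i, hir⟩ = y ⟨i, his⟩ := by
  intro r
  induction r with
  | zero =>
    intro s x y hxpos hypos hxmono hymono k hk1 hktop hsum
    rcases Nat.eq_zero_or_pos s with hs | hs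
    · subst hs
      exact ⟨rfl, fun i hir _ => absurd hir (Nat.not_lt_zero i)⟩
    · exfalso
      have h := hsum 0
      simp only [Finset.univ_eq_empty, Finset.sum_empty] at h
      have : 0 < ∑ j, (y j) ^ (k 0) := by
        apply Finset.sum_pos
        · intro j _
          exact Real.rpow_pos_of_pos (hypos j) _
        · exact Finset.univ_nonempty_iff.2 (Fin.pos_iff_nonempty.1 hs)
      linarith
  | succ r ih =>
    intro s x y hxpos hypos hxmono hymono k hk1 hktop hsum
    rcases Nat.eq_zero_or_pos s with hs | hs
    · exfalso
      subst hs
      have h := hsum 0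
      simp only [Finset.univ_eq_empty, Finset.sum_empty] at h
      have : 0 < ∑ i, (x i) ^ (k 0) := by
        apply Finset.sum_pos
        · intro i _
          exact Real.rpow_pos_of_pos (hxpos i) _
        · exact Finset.univ_nonempty
      linarith
    obtain ⟨s', rfl⟩ : ∃ s', s = s' + 1 := ⟨s - 1, (Nat.succ_pred_eq_of_pos hs).symm⟩
    have hr0 : (0 : ℕ) < r + 1 := Nat.succ_pos r
    have hhead : x ⟨0, hr0⟩ = y ⟨0, hs⟩ := by
      apply le_antisymm
      · exact head_le_aux _ _ hr0 hs x y hxpos hypos hymono k hk1 hktop hsum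
      · exact head_le_aux _ _ hs hr0 y x hypos hxpos hxmono k hk1 hktop
          (fun n => (hsum n).symm)
    have hx0 : x ⟨0, hr0⟩ = x 0 := rfl
    have hy0 : y ⟨0, hs⟩ = y 0 := rfl
    have hsum' : ∀ n, ∑ i : Fin r, (x i.succ) ^ (k n) = ∑ j : Fin s', (y j.succ) ^ (k n) := by
      intro n
      have h := hsum n
      rw [Fin.sum_univ_succ (fun i => (x i) ^ (k n)),
        Fin.sum_univ_succ (fun j => (y j) ^ (k n))] at h
      rw [← hx0, ← hy0, hhead] at h
      linarith
    obtain ⟨hrs, hxy⟩ := ih s' (fun i => x i.succ) (fun j => y j.succ)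
      (fun i => hxpos _) (fun j => hypos _)
      (fun i j hij => hxmono _ _ (Fin.succ_le_succ_iff.2 hij))
      (fun i j hij => hymono _ _ (Fin.succ_le_succ_iff.2 hij))
      k hk1 hktop hsum'
    refine ⟨by omega, fun i hir his => ?_⟩
    match i with
    | 0 => exact hhead
    | Nat.succ m =>
      have h := hxy m (Nat.lt_of_succ_lt_succ hir) (Nat.lt_of_succ_lt_succ his)
      exact h

/-- Let `x_1 ≥ … ≥ x_r > 0` and `y_1 ≥ … ≥ y_s > 0` be non-increasing finite sequences of
positive reals, and `(k_n)` a sequence of reals with `k_n ≥ 1` tending to infinity.  If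
`Σ x_i ^ (k_n) = Σ y_j ^ (k_n)` for all `n`, then `r = s` and `x_i = y_i` for all `i`. -/
theorem power_sums_along_sequence_determine_sequences
    (r s : ℕ) (x : Fin r → ℝ) (y : Fin s → ℝ)
    (hxpos : ∀ i, 0 < x i) (hypos : ∀ j, 0 < y j)
    (hxmono : ∀ i j : Fin r, i ≤ j → x j ≤ x i)
    (hymono : ∀ i j : Fin s, i ≤ j → y j ≤ y i)
    (k : ℕ → ℝ) (hk1 : ∀ n, 1 ≤ k n)
    (hktop : Filter.Tendsto k Filter.atTop Filter.atTop)
    (hsum : ∀ n, ∑ i, (x i) ^ (k n) = ∑ j, (y j) ^ (k n)) :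
    r = s ∧ ∀ (i : ℕ) (hir : i < r) (his : i < s), x ⟨i, hir⟩ = y ⟨i, his⟩ :=
  main_aux r s x y hxpos hypos hxmono hymono k hk1 hktop hsum
end

section
/- For two finite simple graphs G and H the following are equivalent: (1) G and H are singularly cospectral; (2) f_G(p) = f_H(p) for every real p ≥ 1; (3) there exists a sequence of real numbers (x_n) with x_n ≥ 1 for all n and x_n → ∞ such that f_G(x_n) = f_H(x_n) for all n. -/
open Matrix Polynomial

/-- The real adjacency matrix of a finite simple graph. -/
noncomputable def SimpleGraph.adjMat {V : Type*} [Fintype V] (G : SimpleGraph V) :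
    Matrix V V ℝ :=
  letI := Classical.decRel G.Adj
  G.adjMatrix ℝ

/-- The multiset of eigenvalues of the adjacency matrix, counted with multiplicity
(the roots of the characteristic polynomial). -/
noncomputable def SimpleGraph.eigMultiset {V : Type*} [Fintype V] [DecidableEq V]
    (G : SimpleGraph V) : Multiset ℝ :=
  G.adjMat.charpoly.roots

/-- The multiset of nonzero singular values of a graph, counted with multiplicity:
the nonzero absolute values of the eigenvalues of its adjacency matrix. -/
noncomputable def SimpleGraph.nzSingVals {V : Type*} [Fintype V] [DecidableEq V]
    (G : SimpleGraph V) : Multiset ℝ :=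
  (G.eigMultiset.map (fun x => |x|)).filter (fun x => x ≠ 0)

/-- Two graphs are singularly cospectral if their multisets of nonzero singular
values (with multiplicities) coincide. -/
def SingularlyCospectral {V W : Type*} [Fintype V] [DecidableEq V] [Fintype W] [DecidableEq W]
    (G : SimpleGraph V) (H : SimpleGraph W) : Prop :=
  G.nzSingVals = H.nzSingVals

/-- The Schatten `p`-norm of the adjacency matrix of `G`:
`f_G(p) = (Σ_i s_i(G)^p)^(1/p)`, where the `s_i(G)` are the singular values of `G`,
i.e. the absolute values of the eigenvalues of its adjacency matrix. -/
noncomputable def SimpleGraph.schattenNorm {V : Type*} [Fintype V] [DecidableEq V]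
    (G : SimpleGraph V) (p : ℝ) : ℝ :=
  ((G.eigMultiset.map (fun x => |x| ^ p)).sum) ^ (1 / p)

/-!
The power sums `∑ s ^ p` of a finite multiset of positive reals determine it as soon as they are
known along a sequence `p → ∞`: after dividing by `m ^ p`, where `m` is the largest element, the
power sum tends to the multiplicity of `m`. Applied to the symmetric difference of two multisets
with the same power sums, this shows that the symmetric difference is empty. Zero singular values
do not contribute to `f_G(p) ^ p`, so for `p ≥ 1` the Schatten norm determines exactly the power
sum of the nonzero singular values.
-/

open Filter Topology

namespace Multiset

theorem sum_map_tsub_eq_of_sum_map_eq {α β : Type*} [DecidableEq α] [AddCancelCommMonoid β]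
    {S T : Multiset α} {f : α → β} (h : (S.map f).sum = (T.map f).sum) :
    ((S - T).map f).sum = ((T - S).map f).sum := by
  have hS : (S.map f).sum = ((S - T).map f).sum + ((S ∩ T).map f).sum := by
    rw [← sum_add, ← map_add, sub_add_inter]
  have hT : (T.map f).sum = ((T - S).map f).sum + ((S ∩ T).map f).sum := by
    rw [← sum_add, ← map_add, inter_comm, sub_add_inter]
  rw [hS, hT] at h
  exact add_right_cancel h

theorem sum_map_rpow_filter_ne_zero (M : Multiset ℝ) {p : ℝ} (hp : p ≠ 0) :
    ((M.filter (· ≠ 0)).map (· ^ p)).sum = (M.map (· ^ p)).sum := by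
  nth_rw 2 [← filter_add_not (· ≠ 0) M]
  rw [map_add, sum_add, left_eq_add]
  refine sum_eq_zero fun y hy => ?_
  obtain ⟨z, hz, rfl⟩ := mem_map.1 hy
  rw [of_not_not (mem_filter.1 hz).2, Real.zero_rpow hp]

variable {ι : Type*} {l : Filter ι} {x : ι → ℝ}

theorem tendsto_sum_map_div_rpow_count {M : Multiset ℝ} {m : ℝ}
    (hM : ∀ s ∈ M, s ∈ Set.Ioc 0 m) (hx : Tendsto x l atTop) :
    Tendsto (fun i => (M.map fun s => (s / m) ^ x i).sum) l (𝓝 (M.count m)) := by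
  have hterm : ∀ s ∈ M,
      Tendsto (fun i => (s / m) ^ x i) l (𝓝 (if s = m then (1 : ℝ) else 0)) := by
    intro s hs
    obtain ⟨hs0, hsm⟩ := hM s hs
    by_cases hseq : s = m
    · subst hseq
      simpa [div_self hs0.ne'] using tendsto_const_nhds
    · have hlt : s / m < 1 := (div_lt_one (hs0.trans_le hsm)).2 (hsm.lt_of_ne hseq)
      have hgt : -1 < s / m := neg_one_lt_zero.trans (div_pos hs0 (hs0.trans_le hsm))
      simpa [hseq, Function.comp_def] using (tendsto_rpow_atTop_of_base_lt_one _ hgt hlt).comp hx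
  convert tendsto_multiset_sum M hterm using 2
  rw [sum_map_eq_nsmul_single m (fun s hs _ => if_neg hs), if_pos rfl, nsmul_one]

theorem count_eq_of_sum_map_rpow_eq [l.NeBot] {S T : Multiset ℝ} {m : ℝ}
    (hS : ∀ s ∈ S, s ∈ Set.Ioc 0 m) (hT : ∀ s ∈ T, s ∈ Set.Ioc 0 m) (hx : Tendsto x l atTop)
    (h : ∀ᶠ i in l, (S.map (· ^ x i)).sum = (T.map (· ^ x i)).sum) :
    S.count m = T.count m := by
  have hdiv : ∀ M : Multiset ℝ, (∀ s ∈ M, s ∈ Set.Ioc 0 m) → ∀ i,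
      (M.map fun s => (s / m) ^ x i).sum = (M.map (· ^ x i)).sum / m ^ x i := by
    intro M hM i
    rw [div_eq_mul_inv, ← sum_map_mul_right]
    refine congrArg sum (map_congr rfl fun s hs => ?_)
    rw [Real.div_rpow (hM s hs).1.le ((hM s hs).1.trans_le (hM s hs).2).le, div_eq_mul_inv]
  have hST : (fun i => (S.map fun s => (s / m) ^ x i).sum) =ᶠ[l]
      fun i => (T.map fun s => (s / m) ^ x i).sum := by
    filter_upwards [h] with i hi
    rw [hdiv S hS, hdiv T hT, hi]
  exact_mod_cast tendsto_nhds_unique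
    ((tendsto_sum_map_div_rpow_count hS hx).congr' hST) (tendsto_sum_map_div_rpow_count hT hx)

theorem eq_of_sum_map_rpow_eq [l.NeBot] {S T : Multiset ℝ}
    (hS : ∀ s ∈ S, 0 < s) (hT : ∀ s ∈ T, 0 < s) (hx : Tendsto x l atTop)
    (h : ∀ᶠ i in l, (S.map (· ^ x i)).sum = (T.map (· ^ x i)).sum) :
    S = T := by
  by_contra hne
  have hD : S - T + (T - S) ≠ 0 := by
    rw [Ne, add_eq_zero, tsub_eq_zero_iff_le, tsub_eq_zero_iff_le]
    exact fun hle => hne (le_antisymm hle.1 hle.2)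
  obtain ⟨m, hmD, hmax⟩ :=
    (S - T + (T - S)).toFinset.exists_max_image id (toFinset_nonempty.2 hD)
  have hIoc : ∀ s ∈ S - T + (T - S), s ∈ Set.Ioc 0 m := by
    intro s hs
    refine ⟨?_, hmax s (mem_toFinset.2 hs)⟩
    rcases mem_add.1 hs with hs | hs
    · exact hS s (mem_of_le tsub_le_self hs)
    · exact hT s (mem_of_le tsub_le_self hs)
  have hcount : (S - T).count m = (T - S).count m :=
    count_eq_of_sum_map_rpow_eq (fun s hs => hIoc s (mem_add.2 (.inl hs)))
      (fun s hs => hIoc s (mem_add.2 (.inr hs))) hx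
      (h.mono fun i hi => sum_map_tsub_eq_of_sum_map_eq hi)
  have hpos : 0 < (S - T + (T - S)).count m := count_pos.2 (mem_toFinset.1 hmD)
  rw [count_add] at hpos
  rw [count_sub, count_sub] at hpos hcount
  omega

end Multiset

namespace SimpleGraph

variable {V : Type*} [Fintype V] [DecidableEq V]

theorem pos_of_mem_nzSingVals (G : SimpleGraph V) : ∀ s ∈ G.nzSingVals, 0 < s := by
  intro s hs
  obtain ⟨hs, hs0⟩ := Multiset.mem_filter.1 hs
  obtain ⟨y, -, rfl⟩ := Multiset.mem_map.1 hs
  exact (abs_nonneg y).lt_of_ne' hs0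

theorem schattenNorm_eq (G : SimpleGraph V) {p : ℝ} (hp : p ≠ 0) :
    G.schattenNorm p = ((G.nzSingVals.map (· ^ p)).sum) ^ (1 / p) := by
  rw [schattenNorm, nzSingVals, Multiset.sum_map_rpow_filter_ne_zero _ hp, Multiset.map_map]
  rfl

theorem schattenNorm_eq_schattenNorm_iff {W : Type*} [Fintype W] [DecidableEq W]
    (G : SimpleGraph V) (H : SimpleGraph W) {p : ℝ} (hp : p ≠ 0) :
    G.schattenNorm p = H.schattenNorm p ↔
      (G.nzSingVals.map (· ^ p)).sum = (H.nzSingVals.map (· ^ p)).sum := by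
  have hnonneg : ∀ M : Multiset ℝ, (∀ s ∈ M, 0 < s) → 0 ≤ (M.map (· ^ p)).sum :=
    fun M hM => Multiset.sum_nonneg fun _ hy => by
      obtain ⟨s, hs, rfl⟩ := Multiset.mem_map.1 hy
      exact Real.rpow_nonneg (hM s hs).le p
  rw [G.schattenNorm_eq hp, H.schattenNorm_eq hp,
    Real.rpow_left_inj (hnonneg _ G.pos_of_mem_nzSingVals) (hnonneg _ H.pos_of_mem_nzSingVals)
      (one_div_ne_zero hp)]

end SimpleGraph

/-- For two finite simple graphs `G` and `H` the following are equivalent: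
(1) `G` and `H` are singularly cospectral;
(2) `f_G(p) = f_H(p)` for every real `p ≥ 1`;
(3) there is a sequence `(x_n)` of reals with `x_n ≥ 1` tending to infinity such that
`f_G(x_n) = f_H(x_n)` for all `n`. -/
theorem singularlyCospectral_iff_schattenNorm
    {V W : Type*} [Fintype V] [DecidableEq V] [Fintype W] [DecidableEq W]
    (G : SimpleGraph V) (H : SimpleGraph W) :
    (SingularlyCospectral G H ↔ ∀ p : ℝ, 1 ≤ p → G.schattenNorm p = H.schattenNorm p) ∧
    (SingularlyCospectral G H ↔ ∃ x : ℕ → ℝ, (∀ n, 1 ≤ x n) ∧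
      Filter.Tendsto x Filter.atTop Filter.atTop ∧
      ∀ n, G.schattenNorm (x n) = H.schattenNorm (x n)) := by
  have hiff : ∀ p : ℝ, 1 ≤ p → (G.schattenNorm p = H.schattenNorm p ↔
      (G.nzSingVals.map (· ^ p)).sum = (H.nzSingVals.map (· ^ p)).sum) := fun p hp =>
    G.schattenNorm_eq_schattenNorm_iff H (by positivity)
  have h12 : SingularlyCospectral G H → ∀ p : ℝ, 1 ≤ p → G.schattenNorm p = H.schattenNorm p :=
    fun hGH p hp => (hiff p hp).2 (congrArg (fun M => (M.map (· ^ p)).sum) hGH)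
  have h23 : (∀ p : ℝ, 1 ≤ p → G.schattenNorm p = H.schattenNorm p) →
      ∃ x : ℕ → ℝ, (∀ n, 1 ≤ x n) ∧ Tendsto x atTop atTop ∧
        ∀ n, G.schattenNorm (x n) = H.schattenNorm (x n) := fun h =>
    ⟨fun n => n + 1, fun n => by simp, tendsto_natCast_atTop_atTop.atTop_add tendsto_const_nhds,
      fun n => h _ (by simp)⟩
  have h31 : (∃ x : ℕ → ℝ, (∀ n, 1 ≤ x n) ∧ Tendsto x atTop atTop ∧
      ∀ n, G.schattenNorm (x n) = H.schattenNorm (x n)) → SingularlyCospectral G H :=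
    fun ⟨x, hx1, hx, hxGH⟩ => Multiset.eq_of_sum_map_rpow_eq G.pos_of_mem_nzSingVals
      H.pos_of_mem_nzSingVals hx (.of_forall fun n => (hiff _ (hx1 n)).1 (hxGH n))
  exact ⟨⟨h12, fun h => h31 (h23 h)⟩, ⟨fun h => h23 (h12 h), h31⟩⟩
end

section
/- Let F be a finite simple graph on n ≥ 3 vertices that is not bipartite, with adjacency matrix A_F. Let G_F be the graph on two disjoint copies of V(F) in which a vertex u in one copy is adjacent to a vertex v in the other copy if and only if u and v are adjacent in F (the bipartite double cover of F, whose adjacency matrix is the block matrix [[0, A_F],[A_F, 0]]), and let H_F be the disjoint union of two copies of F. Then G_F and H_F are singularly cospectral but not cospectral. -/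
/-!
The adjacency matrix `[[0, A], [A, 0]]` of the double cover is conjugate, by `[[1, 1], [1, -1]]`,
to `diag(A, -A)`, so its spectrum is `spec A + (-spec A)`, while that of `F ⊕ F` is
`spec A + spec A`; the absolute values agree. If the spectra themselves agreed, `spec A` would be
symmetric, so `tr A^m = ∑ λ^m` would vanish for every odd `m`. But a non-bipartite graph has a
closed walk of some odd length `m`, and `tr A^m` counts closed walks of length `m`, so it is
positive.
-/

open Matrix Polynomial

/-- The bipartite double cover of a graph `F`: the graph on two disjoint copies of the
vertex set of `F` in which a vertex `u` of one copy is adjacent to a vertex `v` of the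
other copy if and only if `u` and `v` are adjacent in `F`. -/
def SimpleGraph.doubleCover {V : Type*} (F : SimpleGraph V) : SimpleGraph (V ⊕ V) where
  Adj x y := ∃ a b, F.Adj a b ∧
    ((x = Sum.inl a ∧ y = Sum.inr b) ∨ (x = Sum.inr a ∧ y = Sum.inl b))
  symm := by
    constructor
    rintro x y ⟨a, b, hab, (⟨hx, hy⟩ | ⟨hx, hy⟩)⟩
    · exact ⟨b, a, hab.symm, Or.inr ⟨hy, hx⟩⟩
    · exact ⟨b, a, hab.symm, Or.inl ⟨hy, hx⟩⟩
  loopless := by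
    constructor
    rintro x ⟨a, b, hab, (⟨hx, hy⟩ | ⟨hx, hy⟩)⟩ <;> subst hx <;> simp_all

namespace Matrix

section RCLike

variable {𝕜 n : Type*} [RCLike 𝕜] [Fintype n] [DecidableEq n] {A : Matrix n n 𝕜}

theorem IsHermitian.charpoly_neg (hA : A.IsHermitian) :
    (-A).charpoly = ∏ i, (X - C (-(hA.eigenvalues i : 𝕜))) := by
  conv_lhs => rw [hA.spectral_theorem, ← map_neg, Unitary.conjStarAlgAut_apply,
    charpoly_mul_comm, ← mul_assoc]
  simp [charpoly_diagonal]

theorem IsHermitian.roots_charpoly_neg (hA : A.IsHermitian) :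
    (-A).charpoly.roots = A.charpoly.roots.map Neg.neg := by
  rw [hA.charpoly_neg, hA.roots_charpoly_eq_eigenvalues,
    roots_prod _ _ (Finset.prod_ne_zero_iff.mpr fun i _ => X_sub_C_ne_zero _)]
  simp [Multiset.map_map]

theorem IsHermitian.trace_pow (hA : A.IsHermitian) (m : ℕ) :
    (A ^ m).trace = ∑ i, (hA.eigenvalues i : 𝕜) ^ m := by
  conv_lhs => rw [hA.spectral_theorem, ← map_pow, Unitary.conjStarAlgAut_apply, trace_mul_cycle]
  simp [diagonal_pow, trace_diagonal]

theorem IsHermitian.trace_pow_eq_sum_roots_pow (hA : A.IsHermitian) (m : ℕ) :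
    (A ^ m).trace = (A.charpoly.roots.map (· ^ m)).sum := by
  rw [hA.trace_pow, hA.roots_charpoly_eq_eigenvalues, Multiset.map_map, Finset.sum_eq_multiset_sum]
  rfl

end RCLike

theorem charpoly_fromBlocks_zero_self_self {R n : Type*} [CommRing R] [Invertible (2 : R)]
    [Fintype n] [DecidableEq n] (A : Matrix n n R) :
    (fromBlocks 0 A A 0).charpoly = A.charpoly * (-A).charpoly := by
  set P : Matrix (n ⊕ n) (n ⊕ n) R := fromBlocks 1 1 1 (-1)
  have hPP : P * P = (2 : R) • (1 : Matrix (n ⊕ n) (n ⊕ n) R) := by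
    rw [two_smul, ← fromBlocks_one, fromBlocks_add]
    simp [P, fromBlocks_multiply]
  have hconj : fromBlocks 0 A A 0 = P * fromBlocks A 0 0 (-A) * ((⅟2 : R) • P) := by
    simp [P, fromBlocks_multiply, fromBlocks_smul]
  rw [hconj, mul_assoc, charpoly_mul_comm, mul_assoc, smul_mul_assoc, hPP, smul_smul,
    invOf_mul_self, one_smul, mul_one, charpoly_fromBlocks_zero₁₂]

end Matrix

theorem Multiset.sum_map_pow_eq_zero_of_map_neg_eq {R : Type*} [Ring R] [IsAddTorsionFree R]
    {s : Multiset R} (hs : s.map Neg.neg = s) {m : ℕ} (hm : Odd m) :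
    (s.map (· ^ m)).sum = 0 := by
  rw [← neg_eq_self]
  conv_rhs => rw [← hs]
  simp [Multiset.map_map, hm.neg_pow]

namespace SimpleGraph

variable {V W : Type*} [Fintype V] [Fintype W]

theorem adjMat_eq_adjMatrix (G : SimpleGraph V) [DecidableRel G.Adj] :
    G.adjMat = G.adjMatrix ℝ := by
  unfold adjMat
  congr!

theorem isHermitian_adjMat (G : SimpleGraph V) : G.adjMat.IsHermitian := by
  classical
  exact G.adjMat_eq_adjMatrix ▸ G.isHermitian_adjMatrix ℝ

theorem adjMat_doubleCover (F : SimpleGraph V) :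
    F.doubleCover.adjMat = fromBlocks 0 F.adjMat F.adjMat 0 := by
  classical
  simp only [adjMat_eq_adjMatrix]
  ext (a | a) (b | b) <;> simp only [adjMatrix_apply] <;> simp [doubleCover]

theorem adjMat_sum (G : SimpleGraph V) (H : SimpleGraph W) :
    (G ⊕g H).adjMat = fromBlocks G.adjMat 0 0 H.adjMat := by
  classical
  simp only [adjMat_eq_adjMatrix]
  ext (a | a) (b | b) <;> simp [adjMatrix_apply]

theorem trace_adjMatrix_pow_pos {α : Type*} [Semiring α] [PartialOrder α] [IsStrictOrderedRing α]
    [DecidableEq V] (G : SimpleGraph V) [DecidableRel G.Adj] {u : V} (p : G.Walk u u) :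
    0 < (G.adjMatrix α ^ p.length).trace := by
  simp only [trace, diag_apply, adjMatrix_pow_apply_eq_card_walk]
  have hp : 0 < Fintype.card {q : G.Walk u u | q.length = p.length} :=
    Fintype.card_pos_iff.mpr ⟨⟨p, rfl⟩⟩
  exact_mod_cast Finset.sum_pos' (fun _ _ => Nat.zero_le _) ⟨u, Finset.mem_univ _, hp⟩

section Spectrum

variable [DecidableEq V] [DecidableEq W]

theorem eigMultiset_sum (G : SimpleGraph V) (H : SimpleGraph W) :
    (G ⊕g H).eigMultiset = G.eigMultiset + H.eigMultiset := by
  rw [eigMultiset, adjMat_sum, charpoly_fromBlocks_zero₁₂,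
    roots_mul ((charpoly_monic _).mul (charpoly_monic _)).ne_zero]
  rfl

theorem eigMultiset_doubleCover (F : SimpleGraph V) :
    F.doubleCover.eigMultiset = F.eigMultiset + F.eigMultiset.map Neg.neg := by
  rw [eigMultiset, adjMat_doubleCover, charpoly_fromBlocks_zero_self_self,
    roots_mul ((charpoly_monic _).mul (charpoly_monic _)).ne_zero,
    F.isHermitian_adjMat.roots_charpoly_neg]
  rfl

theorem map_neg_eigMultiset_ne_of_not_colorable_two {G : SimpleGraph V} (hG : ¬ G.Colorable 2) :
    G.eigMultiset.map Neg.neg ≠ G.eigMultiset := by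
  classical
  intro hsymm
  obtain ⟨u, p, hp⟩ : ∃ u, ∃ p : G.Walk u u, Odd p.length := by
    simpa [two_colorable_iff_forall_loop_even, Nat.not_even_iff_odd] using hG
  have hpos := G.trace_adjMatrix_pow_pos (α := ℝ) p
  rw [← adjMat_eq_adjMatrix, G.isHermitian_adjMat.trace_pow_eq_sum_roots_pow] at hpos
  exact hpos.ne' (Multiset.sum_map_pow_eq_zero_of_map_neg_eq hsymm hp)

end Spectrum

end SimpleGraph

theorem doubleCover_singularlyCospectral_not_cospectral_two_copies_general
    {V : Type*} [Fintype V] [DecidableEq V] (F : SimpleGraph V)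
    (hnotbip : ¬ F.Colorable 2) :
    SingularlyCospectral F.doubleCover (F ⊕g F) ∧
    F.doubleCover.eigMultiset ≠ (F ⊕g F).eigMultiset := by
  rw [SingularlyCospectral, SimpleGraph.nzSingVals, SimpleGraph.nzSingVals,
    SimpleGraph.eigMultiset_doubleCover, SimpleGraph.eigMultiset_sum]
  refine ⟨?_, fun h =>
    SimpleGraph.map_neg_eigMultiset_ne_of_not_colorable_two hnotbip (add_left_cancel h)⟩
  simp [Multiset.map_map]

/-- Let `F` be a non-bipartite graph on `n ≥ 3` vertices.  Then the bipartite double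
cover `G_F` of `F` and the disjoint union `H_F = 2F` of two copies of `F` are
singularly cospectral but not cospectral. -/
theorem doubleCover_singularlyCospectral_not_cospectral_two_copies
    {V : Type*} [Fintype V] [DecidableEq V] (F : SimpleGraph V)
    (hcard : 3 ≤ Fintype.card V) (hnotbip : ¬ F.Colorable 2) :
    SingularlyCospectral F.doubleCover (F ⊕g F) ∧
    F.doubleCover.eigMultiset ≠ (F ⊕g F).eigMultiset :=
  doubleCover_singularlyCospectral_not_cospectral_two_copies_general F hnotbip
end

section
/- Fix integers n ≥ 3 and 1 ≤ j ≤ n. Let H be the graph on 2n+1 vertices consisting of two disjoint copies of the complete graph K_n together with one additional vertex w adjacent to exactly j fixed vertices in each of the two copies. Then the characteristic polynomial of the adjacency matrix of H equals (x+1)^{2n−3} (x−(n−1)) Q_{n,j}(x), where Q_{n,j}(x) = x(x+1)(x−(n−1)) − 2j(x−(n−1−j)). -/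
open Matrix Polynomial

/-- Two disjoint copies of the complete graph `K_n` together with one additional vertex
(the vertex `none`) adjacent exactly to the vertices of `S₁` in the first copy and to
the vertices of `S₂` in the second copy. -/
def twoCompleteWithApex (n : ℕ) (S₁ S₂ : Finset (Fin n)) :
    SimpleGraph (Option (Fin n ⊕ Fin n)) where
  Adj x y := x ≠ y ∧
    ((∃ a b : Fin n, x = some (Sum.inl a) ∧ y = some (Sum.inl b)) ∨
     (∃ a b : Fin n, x = some (Sum.inr a) ∧ y = some (Sum.inr b)) ∨
     (∃ a : Fin n,
       (a ∈ S₁ ∧ ((x = none ∧ y = some (Sum.inl a)) ∨ (y = none ∧ x = some (Sum.inl a)))) ∨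
       (a ∈ S₂ ∧ ((x = none ∧ y = some (Sum.inr a)) ∨ (y = none ∧ x = some (Sum.inr a))))))
  symm := by
    constructor
    rintro x y ⟨hne, h⟩
    refine ⟨hne.symm, ?_⟩
    obtain (⟨a, b, hx, hy⟩ | ⟨a, b, hx, hy⟩ | ⟨a, h⟩) := h
    · exact Or.inl ⟨b, a, hy, hx⟩
    · exact Or.inr (Or.inl ⟨b, a, hy, hx⟩)
    · exact Or.inr (Or.inr ⟨a, by tauto⟩)
  loopless := by constructor; rintro x ⟨hne, -⟩; exact hne rfl

/-- The cubic polynomial `Q_{n,j}(x) = x (x+1) (x-(n-1)) - 2 j (x-(n-1-j))`. -/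
noncomputable def Qpoly (n j : ℕ) : Polynomial ℝ :=
  Polynomial.X * (Polynomial.X + 1) * (Polynomial.X - Polynomial.C ((n : ℝ) - 1)) -
    Polynomial.C (2 * (j : ℝ)) * (Polynomial.X - Polynomial.C ((n : ℝ) - 1 - (j : ℝ)))

/-! Ordering the vertices as the two cliques followed by the apex `w`, the adjacency matrix of `H`
is that of `2 K_n` bordered by the indicator vector `u` of the neighbours of `w`. For `x` outside
the spectrum of `2 K_n` the Schur complement gives `χ_H(x) = χ_{2K_n}(x) (x - uᵀ (x - A)⁻¹ u)`, and
the resolvent of `K_n` is explicit: `((x+1) I - J)⁻¹ = (x+1)⁻¹ I + ((x+1)(x+1-n))⁻¹ J` with `J` the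
all-ones matrix. This evaluates `χ_H` at every `x > n`, which determines it. -/

namespace Matrix

variable {ι : Type*} [Fintype ι] {R K : Type*}

lemma of_one_mul_of_one [NonAssocSemiring R] :
    (of 1 : Matrix ι ι R) * of 1 = (Fintype.card ι : R) • of 1 := by
  ext; simp [mul_apply]

lemma of_one_mulVec [NonAssocSemiring R] (w : ι → R) :
    (of 1 : Matrix ι ι R) *ᵥ w = fun _ => ∑ i, w i := by
  ext; simp [mulVec, dotProduct]

variable [DecidableEq ι]

lemma scalar_sub_of_one_sub_one [Ring R] (x : R) :
    scalar ι x - (of 1 - 1) = (x + 1) • (1 : Matrix ι ι R) - of 1 := by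
  ext i j
  by_cases h : i = j <;> simp [h]

lemma dotProduct_smul_one_add_smul_of_one_mulVec [CommRing R] (a b : R) (w : ι → R) :
    w ⬝ᵥ ((a • 1 + b • of 1 : Matrix ι ι R) *ᵥ w) = a * (w ⬝ᵥ w) + b * (∑ i, w i) ^ 2 := by
  rw [add_mulVec, smul_mulVec, smul_mulVec, one_mulVec, of_one_mulVec, dotProduct_add,
    dotProduct_smul, dotProduct_smul]
  simp [dotProduct, sq, Finset.sum_mul]

variable [Field K]

lemma det_smul_one_sub_of_one [Nonempty ι] {c : K} (hc : c ≠ 0) :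
    (c • 1 - of 1 : Matrix ι ι K).det = c ^ (Fintype.card ι - 1) * (c - Fintype.card ι) := by
  have hfactor : (c • 1 - of 1 : Matrix ι ι K) =
      c • ((1 : Matrix ι ι K) +
        replicateCol Unit (fun _ : ι => -c⁻¹) * replicateRow Unit (fun _ : ι => (1 : K))) := by
    ext a b
    by_cases h : a = b <;> simp [mul_apply, h, mul_add, hc, sub_eq_add_neg]
  have hcard : c ^ Fintype.card ι = c ^ (Fintype.card ι - 1) * c := by
    rw [← pow_succ, Nat.sub_add_cancel Fintype.card_pos]
  rw [hfactor, det_smul, det_one_add_replicateCol_mul_replicateRow, hcard]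
  simp [dotProduct]
  field_simp
  ring

lemma inv_smul_one_sub_of_one {c : K} (hc : c ≠ 0) (hcι : c ≠ Fintype.card ι) :
    (c • 1 - of 1 : Matrix ι ι K)⁻¹ = c⁻¹ • 1 + (c * (c - Fintype.card ι))⁻¹ • of 1 := by
  refine inv_eq_right_inv ?_
  have hcι' : c - Fintype.card ι ≠ 0 := sub_ne_zero.mpr hcι
  simp only [Matrix.sub_mul, Matrix.mul_add, Matrix.smul_mul, Matrix.mul_smul, Matrix.one_mul,
    Matrix.mul_one, of_one_mul_of_one]
  ext a b
  simp
  field_simp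
  ring

lemma eval_charpoly_of_one_sub_one [Nonempty ι] {x : K} (hx : x + 1 ≠ 0) :
    (of 1 - 1 : Matrix ι ι K).charpoly.eval x =
      (x + 1) ^ (Fintype.card ι - 1) * (x + 1 - Fintype.card ι) := by
  rw [eval_charpoly, scalar_sub_of_one_sub_one, det_smul_one_sub_of_one hx]

lemma boole_dotProduct_inv_scalar_sub_of_one_sub_one_mulVec_boole (S : Finset ι) {x : K}
    (hx : x + 1 ≠ 0) (hxι : x + 1 ≠ Fintype.card ι) :
    (fun i => if i ∈ S then 1 else 0) ⬝ᵥ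
        ((scalar ι x - (of 1 - 1))⁻¹ *ᵥ fun i => if i ∈ S then 1 else 0) =
      S.card / (x + 1) + S.card ^ 2 / ((x + 1) * (x + 1 - Fintype.card ι)) := by
  rw [scalar_sub_of_one_sub_one, inv_smul_one_sub_of_one hx hxι,
    dotProduct_smul_one_add_smul_of_one_mulVec]
  have hxι' : x + 1 - Fintype.card ι ≠ 0 := sub_ne_zero.mpr hxι
  simp [dotProduct]
  field_simp

variable {m n : Type*} [Fintype m] [DecidableEq m] [Fintype n] [DecidableEq n]

lemma det_fromBlocks_replicateCol_replicateRow {A : Matrix m m K} (hA : IsUnit A.det)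
    (u v : m → K) (d : K) :
    (fromBlocks A (replicateCol Unit u) (replicateRow Unit v) (of fun _ _ => d)).det =
      A.det * (d - v ⬝ᵥ (A⁻¹ *ᵥ u)) := by
  let := A.invertibleOfIsUnitDet hA
  rw [det_fromBlocks₁₁, invOf_eq_nonsing_inv, det_unique (n := Unit), Matrix.mul_assoc,
    ← replicateCol_mulVec, sub_apply, replicateRow_mul_replicateCol_apply, of_apply]

lemma eval_charpoly_fromBlocks_replicateCol_replicateRow (B : Matrix m m K) (u v : m → K)
    {x : K} (hx : B.charpoly.eval x ≠ 0) :
    (fromBlocks B (replicateCol Unit u) (replicateRow Unit v) 0).charpoly.eval x =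
      B.charpoly.eval x * (x - v ⬝ᵥ ((scalar m x - B)⁻¹ *ᵥ u)) := by
  have hblocks :
      scalar (m ⊕ Unit) x - fromBlocks B (replicateCol Unit u) (replicateRow Unit v) 0 =
        fromBlocks (scalar m x - B) (replicateCol Unit (-u)) (replicateRow Unit (-v))
          (of fun _ _ => x) := by
    ext (i | i) (j | j) <;> simp [diagonal_apply]
  rw [eval_charpoly, hblocks, det_fromBlocks_replicateCol_replicateRow, ← eval_charpoly]
  · rw [mulVec_neg, neg_dotProduct, dotProduct_neg, neg_neg, sub_eq_add_neg]
  · rwa [← eval_charpoly, isUnit_iff_ne_zero]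

lemma scalar_sub_fromBlocks_zero (B : Matrix m m K) (C : Matrix n n K) (x : K) :
    scalar (m ⊕ n) x - fromBlocks B 0 0 C = fromBlocks (scalar m x - B) 0 0 (scalar n x - C) := by
  ext (i | i) (j | j) <;> simp [diagonal_apply]

lemma inv_fromBlocks_zero {A : Matrix m m K} {D : Matrix n n K} (hA : IsUnit A.det)
    (hD : IsUnit D.det) : (fromBlocks A 0 0 D)⁻¹ = fromBlocks A⁻¹ 0 0 D⁻¹ := by
  refine inv_eq_right_inv ?_
  rw [fromBlocks_multiply]
  simp [mul_nonsing_inv _ hA, mul_nonsing_inv _ hD]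

end Matrix

open Matrix

lemma reindex_adjMat_twoCompleteWithApex {n : ℕ} (S₁ S₂ : Finset (Fin n)) :
    reindex (Equiv.optionEquivSumPUnit (Fin n ⊕ Fin n))
        (Equiv.optionEquivSumPUnit (Fin n ⊕ Fin n)) (twoCompleteWithApex n S₁ S₂).adjMat =
      fromBlocks (fromBlocks (of 1 - 1) 0 0 (of 1 - 1))
        (replicateCol Unit (Sum.elim (fun a => if a ∈ S₁ then 1 else 0)
          (fun a => if a ∈ S₂ then 1 else 0)))
        (replicateRow Unit (Sum.elim (fun a => if a ∈ S₁ then 1 else 0)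
          (fun a => if a ∈ S₂ then 1 else 0))) 0 := by
  ext ((a | a) | ⟨⟩) ((b | b) | ⟨⟩) <;>
    simp [SimpleGraph.adjMat, SimpleGraph.adjMatrix_apply, twoCompleteWithApex, one_apply, sub_ite]

lemma eval_charpoly_twoCompleteWithApex {n : ℕ} (hn : 0 < n) (S₁ S₂ : Finset (Fin n)) {x : ℝ}
    (hx : n < x + 1) :
    (twoCompleteWithApex n S₁ S₂).adjMat.charpoly.eval x =
      ((x + 1) ^ (n - 1) * (x + 1 - n)) ^ 2 *
        (x - (S₁.card + S₂.card) / (x + 1) -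
          (S₁.card ^ 2 + S₂.card ^ 2) / ((x + 1) * (x + 1 - n))) := by
  have : Nonempty (Fin n) := ⟨⟨0, hn⟩⟩
  have hx₀ : 0 < x + 1 := lt_of_le_of_lt n.cast_nonneg hx
  have hxn : 0 < x + 1 - n := sub_pos.mpr hx
  have hK := eval_charpoly_of_one_sub_one (ι := Fin n) hx₀.ne'
  rw [Fintype.card_fin] at hK
  have hKpos : 0 < (of 1 - 1 : Matrix (Fin n) (Fin n) ℝ).charpoly.eval x := by
    rw [hK]; positivity
  have hKunit : IsUnit (scalar (Fin n) x - (of 1 - 1 : Matrix (Fin n) (Fin n) ℝ)).det := by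
    rw [← eval_charpoly]; exact hKpos.ne'.isUnit
  have hcard : x + 1 ≠ Fintype.card (Fin n) := by
    rw [Fintype.card_fin]; exact hx.ne'
  rw [← charpoly_reindex (Equiv.optionEquivSumPUnit (Fin n ⊕ Fin n)),
    reindex_adjMat_twoCompleteWithApex, eval_charpoly_fromBlocks_replicateCol_replicateRow _ _ _
      (by rw [charpoly_fromBlocks_zero₁₂, eval_mul]; positivity),
    charpoly_fromBlocks_zero₁₂, eval_mul, hK, scalar_sub_fromBlocks_zero,
    inv_fromBlocks_zero hKunit hKunit]
  simp only [fromBlocks_mulVec, Sum.elim_comp_inl, Sum.elim_comp_inr, zero_mulVec, add_zero,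
    zero_add, sumElim_dotProduct_sumElim]
  rw [boole_dotProduct_inv_scalar_sub_of_one_sub_one_mulVec_boole _ hx₀.ne' hcard,
    boole_dotProduct_inv_scalar_sub_of_one_sub_one_mulVec_boole _ hx₀.ne' hcard, Fintype.card_fin]
  ring

theorem charpoly_twoCompleteWithApex_general (n j : ℕ) (hn : 3 ≤ n)
    (S₁ S₂ : Finset (Fin n)) (hS₁ : S₁.card = j) (hS₂ : S₂.card = j) :
    (twoCompleteWithApex n S₁ S₂).adjMat.charpoly =
      (Polynomial.X + 1) ^ (2 * n - 3) * (Polynomial.X - Polynomial.C ((n : ℝ) - 1)) *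
        Qpoly n j := by
  refine Polynomial.eq_of_infinite_eval_eq _ _ ((Set.Ioi_infinite (n : ℝ)).mono fun x hx => ?_)
  have hxn : (n : ℝ) < x + 1 := by linarith [Set.mem_Ioi.mp hx]
  have hx₀ : x + 1 ≠ 0 := (lt_of_le_of_lt n.cast_nonneg hxn).ne'
  have hxn' : x + 1 - n ≠ 0 := (sub_pos.mpr hxn).ne'
  have hpow : ((x + 1) ^ (n - 1)) ^ 2 = (x + 1) ^ (2 * n - 3) * (x + 1) := by
    rw [← pow_mul, ← pow_succ]; congr 1; omega
  rw [Set.mem_ofPred_eq, eval_charpoly_twoCompleteWithApex (by omega) S₁ S₂ hxn, hS₁, hS₂, mul_pow,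
    hpow]
  simp only [Qpoly, eval_mul, eval_sub, eval_add, eval_pow, eval_X, eval_C, eval_one]
  field_simp
  ring

/-- Let `n ≥ 3` and `1 ≤ j ≤ n`, and let `H` be two disjoint copies of `K_n` together
with one additional vertex adjacent to exactly `j` fixed vertices in each copy.  Then
the characteristic polynomial of the adjacency matrix of `H` equals
`(x+1)^(2n-3) (x-(n-1)) Q_{n,j}(x)`. -/
theorem charpoly_twoCompleteWithApex (n j : ℕ) (hn : 3 ≤ n) (hj1 : 1 ≤ j) (hjn : j ≤ n)
    (S₁ S₂ : Finset (Fin n)) (hS₁ : S₁.card = j) (hS₂ : S₂.card = j) :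
    (twoCompleteWithApex n S₁ S₂).adjMat.charpoly =
      (Polynomial.X + 1) ^ (2 * n - 3) * (Polynomial.X - Polynomial.C ((n : ℝ) - 1)) *
        Qpoly n j :=
  charpoly_twoCompleteWithApex_general n j hn S₁ S₂ hS₁ hS₂
end

section
/- Fix integers n ≥ 3 and 1 ≤ j ≤ n. Let G be the graph on 2n+1 vertices consisting of the bipartite double cover of K_n (vertex set two disjoint copies of {1,…,n}, with vertex i in one copy adjacent to vertex i' in the other copy if and only if i ≠ i') together with one additional vertex v adjacent to exactly the vertices 1,…,j in each of the two copies. Then the characteristic polynomial of the adjacency matrix of G equals (x−1)^{n−1} (x+1)^{n−2} (x+(n−1)) Q_{n,j}(x), where Q_{n,j}(x) = x(x+1)(x−(n−1)) − 2j(x−(n−1−j)). -/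
open Matrix Polynomial

/-- The bipartite double cover of the complete graph `K_n` (vertex `i` in one copy of
`Fin n` adjacent to vertex `i'` in the other copy iff `i ≠ i'`) together with one
additional vertex (the vertex `none`) adjacent exactly to the first `j` vertices of
each of the two copies. -/
def doubleCoverCompleteWithApex (n j : ℕ) : SimpleGraph (Option (Fin n ⊕ Fin n)) where
  Adj x y :=
    (∃ a b : Fin n, a ≠ b ∧
      ((x = some (Sum.inl a) ∧ y = some (Sum.inr b)) ∨
       (x = some (Sum.inr a) ∧ y = some (Sum.inl b)))) ∨
    (∃ a : Fin n, (a : ℕ) < j ∧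
      ((x = none ∧ (y = some (Sum.inl a) ∨ y = some (Sum.inr a))) ∨
       (y = none ∧ (x = some (Sum.inl a) ∨ x = some (Sum.inr a)))))
  symm := by
    constructor
    rintro x y (⟨a, b, hab, (⟨hx, hy⟩ | ⟨hx, hy⟩)⟩ | ⟨a, ha, h⟩)
    · exact Or.inl ⟨b, a, hab.symm, Or.inr ⟨hy, hx⟩⟩
    · exact Or.inl ⟨b, a, hab.symm, Or.inl ⟨hy, hx⟩⟩
    · exact Or.inr ⟨a, ha, by tauto⟩
  loopless := by
    constructor
    rintro x (⟨a, b, hab, (⟨hx, hy⟩ | ⟨hx, hy⟩)⟩ | ⟨a, ha, (⟨hx, hy⟩ | ⟨hx, hy⟩)⟩) <;>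
      subst hx <;> simp_all

/-!
Order the vertices as (first copy, second copy, apex) and evaluate at `t ∉ {0, 1, -1}`.
A Schur complement on the apex turns `det (t - A)` into `t · det [[P, Q], [Q, P]]` with
`P = t - uuᵀ/t` and `Q = 1 - J - uuᵀ/t`, where `u` is the indicator of the first `j` vertices
of a copy; this determinant is `det (P - Q) · det (P + Q)`. Both `P - Q = (t - 1) + J` and
`P + Q = (t + 1) - J - (2/t) uuᵀ` are scalar plus rank at most two, so by the
Weinstein–Aronszajn identity they reduce to a `1 × 1` and a `2 × 2` determinant in
`1ᵀ1 = n` and `1ᵀu = uᵀu = j`.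
-/

namespace Matrix

variable {m ι K : Type*} [Fintype m] [DecidableEq m] [Field K]

theorem det_smul_one_add_mul [Fintype ι] [DecidableEq ι] {a : K} (ha : a ≠ 0)
    (U : Matrix m ι K) (V : Matrix ι m K) :
    (a • 1 + U * V).det = a ^ Fintype.card m * (1 + a⁻¹ • (V * U)).det := by
  have hinv : (a • 1 : Matrix m m K)⁻¹ = a⁻¹ • 1 :=
    inv_eq_left_inv (by rw [smul_mul_smul, Matrix.one_mul, inv_mul_cancel₀ ha, one_smul])
  rw [det_add_mul U V (by simp [ha]), hinv, det_smul, det_one, mul_one, Matrix.mul_smul,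
    Matrix.mul_one, Matrix.smul_mul]

theorem det_smul_one_add_vecMulVec {a : K} (ha : a ≠ 0) (x y : m → K) :
    (a • 1 + vecMulVec x y).det = a ^ Fintype.card m * (1 + a⁻¹ * (y ⬝ᵥ x)) := by
  rw [vecMulVec_eq Unit, det_smul_one_add_mul ha, det_unique]
  simp

theorem det_smul_one_add_vecMulVec_add_vecMulVec {a : K} (ha : a ≠ 0) (x₁ y₁ x₂ y₂ : m → K) :
    (a • 1 + vecMulVec x₁ y₁ + vecMulVec x₂ y₂).det =
      a ^ Fintype.card m * ((1 + a⁻¹ * (y₁ ⬝ᵥ x₁)) * (1 + a⁻¹ * (y₂ ⬝ᵥ x₂)) -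
        a⁻¹ * (y₁ ⬝ᵥ x₂) * (a⁻¹ * (y₂ ⬝ᵥ x₁))) := by
  have hUV : vecMulVec x₁ y₁ + vecMulVec x₂ y₂ = (of ![x₁, x₂])ᵀ * of ![y₁, y₂] := by
    ext i k
    simp [vecMulVec_apply, mul_apply, Fin.sum_univ_two]
  rw [add_assoc, hUV, det_smul_one_add_mul ha, det_fin_two]
  simp only [add_apply, smul_apply, mul_apply', of_apply, transpose_apply, one_apply_eq,
    one_apply_ne zero_ne_one, one_apply_ne one_ne_zero, smul_eq_mul, zero_add]
  rfl

theorem det_smul_one_sub_fromBlocks_replicateCol_replicateRow {a : K} (ha : a ≠ 0)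
    (B : Matrix m m K) (x y : m → K) :
    (a • 1 - fromBlocks B (replicateCol Unit x) (replicateRow Unit y) 0).det =
      a * (a • 1 - B - a⁻¹ • vecMulVec x y).det := by
  let _ : Invertible (a • 1 : Matrix Unit Unit K) :=
    ⟨a⁻¹ • 1, by simp [smul_smul, ha], by simp [smul_smul, ha]⟩
  have hblocks : a • 1 - fromBlocks B (replicateCol Unit x) (replicateRow Unit y) 0 =
      fromBlocks (a • 1 - B) (-replicateCol Unit x) (-replicateRow Unit y) (a • 1) := by
    rw [← fromBlocks_one, fromBlocks_smul, sub_eq_add_neg, fromBlocks_neg, fromBlocks_add]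
    simp [sub_eq_add_neg]
  rw [hblocks, det_fromBlocks₂₂, det_unique]
  congr 1
  · simp
  · rw [show ⅟(a • 1 : Matrix Unit Unit K) = a⁻¹ • 1 from rfl, Matrix.neg_mul, Matrix.mul_neg,
      Matrix.neg_mul, neg_neg, Matrix.mul_smul, Matrix.mul_one, Matrix.smul_mul, ← vecMulVec_eq]

theorem det_fromBlocks_eq_det_sub_mul_det_add {R : Type*} [CommRing R] (P Q : Matrix m m R) :
    (fromBlocks P Q Q P).det = (P - Q).det * (P + Q).det := by
  have h : fromBlocks 1 0 1 1 * fromBlocks P Q Q P * fromBlocks 1 0 (-1) 1 =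
      fromBlocks (P - Q) Q 0 (P + Q) := by
    simp only [fromBlocks_multiply]
    congr 1 <;> simp <;> abel
  simpa [det_fromBlocks_zero₁₂, det_fromBlocks_zero₂₁] using congrArg det h

end Matrix

theorem SimpleGraph.adjMat_apply {V : Type*} [Fintype V] (G : SimpleGraph V)
    [DecidableRel G.Adj] (x y : V) : G.adjMat x y = if G.Adj x y then 1 else 0 := by
  simp [SimpleGraph.adjMat]

namespace doubleCoverCompleteWithApex

variable (n j : ℕ)

noncomputable def apexNbhd : Fin n → ℝ := fun i => if (i : ℕ) < j then 1 else 0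

theorem reindex_adjMat :
    reindex (Equiv.optionEquivSumPUnit.{0} _) (Equiv.optionEquivSumPUnit.{0} _)
        (doubleCoverCompleteWithApex n j).adjMat =
      fromBlocks (fromBlocks 0 (vecMulVec 1 1 - 1) (vecMulVec 1 1 - 1) 0)
        (replicateCol Unit (Sum.elim (apexNbhd n j) (apexNbhd n j)))
        (replicateRow Unit (Sum.elim (apexNbhd n j) (apexNbhd n j))) 0 := by
  classical
  ext (x | x) (y | y)
  · rcases x with a | a <;> rcases y with b | b <;> by_cases hab : a = b <;>
      simp [SimpleGraph.adjMat_apply, doubleCoverCompleteWithApex, one_apply, hab, Ne.symm]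
  · rcases x with a | a <;> simp [SimpleGraph.adjMat_apply, doubleCoverCompleteWithApex, apexNbhd]
  · rcases y with b | b <;> simp [SimpleGraph.adjMat_apply, doubleCoverCompleteWithApex, apexNbhd]
  · simp [SimpleGraph.adjMat_apply, doubleCoverCompleteWithApex]

variable {n j}

theorem sum_apexNbhd (hjn : j ≤ n) : ∑ i, apexNbhd n j i = j := by
  simp [apexNbhd, Finset.sum_boole, Fin.card_filter_val_lt, hjn]

theorem apexNbhd_dotProduct_self (hjn : j ≤ n) : apexNbhd n j ⬝ᵥ apexNbhd n j = j := by
  rw [← sum_apexNbhd hjn]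
  exact Finset.sum_congr rfl fun i _ => by unfold apexNbhd; split_ifs <;> norm_num

theorem eval_charpoly_eq_mul_det_mul_det {t : ℝ} (ht : t ≠ 0) :
    (doubleCoverCompleteWithApex n j).adjMat.charpoly.eval t =
      t * ((t - 1) • 1 + vecMulVec (1 : Fin n → ℝ) 1).det *
        ((t + 1) • 1 + vecMulVec (-1 : Fin n → ℝ) 1 +
          vecMulVec (-(2 * t⁻¹) • apexNbhd n j) (apexNbhd n j)).det := by
  rw [← charpoly_reindex (Equiv.optionEquivSumPUnit.{0} _), eval_charpoly, reindex_adjMat,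
    scalar_apply, ← smul_one_eq_diagonal,
    det_smul_one_sub_fromBlocks_replicateCol_replicateRow ht]
  set u := apexNbhd n j
  have hblocks : t • 1 - fromBlocks 0 (vecMulVec 1 1 - 1) (vecMulVec 1 1 - 1) 0 -
      t⁻¹ • vecMulVec (Sum.elim u u) (Sum.elim u u) =
      fromBlocks (t • 1 - t⁻¹ • vecMulVec u u) (1 - vecMulVec 1 1 - t⁻¹ • vecMulVec u u)
        (1 - vecMulVec 1 1 - t⁻¹ • vecMulVec u u) (t • 1 - t⁻¹ • vecMulVec u u) := by
    ext (a | a) (b | b) <;> simp [vecMulVec_apply, one_apply]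
  rw [hblocks, det_fromBlocks_eq_det_sub_mul_det_add, mul_assoc]
  congr 3 <;> ext a b <;> by_cases hab : a = b <;>
    simp [vecMulVec_apply, one_apply, hab] <;> ring

end doubleCoverCompleteWithApex

theorem charpoly_doubleCoverCompleteWithApex_general (n j : ℕ) (hn : 3 ≤ n)
    (hjn : j ≤ n) :
    (doubleCoverCompleteWithApex n j).adjMat.charpoly =
      (Polynomial.X - 1) ^ (n - 1) * (Polynomial.X + 1) ^ (n - 2) *
        (Polynomial.X + Polynomial.C ((n : ℝ) - 1)) * Qpoly n j := by
  apply Polynomial.eq_of_infinite_eval_eq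
  refine (({0, 1, -1} : Set ℝ).toFinite.infinite_compl).mono fun t ht => ?_
  simp only [Set.mem_compl_iff, Set.mem_insert_iff, Set.mem_singleton_iff, not_or] at ht
  obtain ⟨ht0, ht1, ht2⟩ := ht
  have hsub : t - 1 ≠ 0 := sub_ne_zero.mpr ht1
  have hadd : t + 1 ≠ 0 := by rwa [← sub_neg_eq_add, sub_ne_zero]
  obtain ⟨k, rfl⟩ : ∃ k, n = k + 2 := ⟨n - 2, by omega⟩
  rw [Set.mem_ofPred_eq, doubleCoverCompleteWithApex.eval_charpoly_eq_mul_det_mul_det ht0,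
    det_smul_one_add_vecMulVec hsub, det_smul_one_add_vecMulVec_add_vecMulVec hadd]
  simp only [Fintype.card_fin, dotProduct_one, one_dotProduct, dotProduct_neg, dotProduct_smul,
    doubleCoverCompleteWithApex.sum_apexNbhd hjn,
    doubleCoverCompleteWithApex.apexNbhd_dotProduct_self hjn, Pi.one_apply, Finset.sum_const,
    Finset.card_univ, nsmul_eq_mul, smul_eq_mul, Nat.cast_add, Nat.cast_ofNat, mul_one,
    Nat.add_one_sub_one, add_tsub_cancel_right, Qpoly, map_sub, map_mul, map_natCast,
    eval_mul, eval_pow, eval_sub, eval_X, eval_one, eval_add, eval_natCast, eval_C]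
  field_simp
  ring

/-- Let `n ≥ 3` and `1 ≤ j ≤ n`, and let `G` be the bipartite double cover of `K_n`
together with one additional vertex adjacent to exactly the vertices `1, …, j` in each
of the two copies.  Then the characteristic polynomial of the adjacency matrix of `G`
equals `(x-1)^(n-1) (x+1)^(n-2) (x+(n-1)) Q_{n,j}(x)`. -/
theorem charpoly_doubleCoverCompleteWithApex (n j : ℕ) (hn : 3 ≤ n) (hj1 : 1 ≤ j)
    (hjn : j ≤ n) :
    (doubleCoverCompleteWithApex n j).adjMat.charpoly =
      (Polynomial.X - 1) ^ (n - 1) * (Polynomial.X + 1) ^ (n - 2) *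
        (Polynomial.X + Polynomial.C ((n : ℝ) - 1)) * Qpoly n j :=
  charpoly_doubleCoverCompleteWithApex_general n j hn hjn
end

section
/- Fix integers n ≥ 3 and 1 ≤ j ≤ n. Let G be the bipartite double cover of K_n together with one additional vertex adjacent to the vertices 1,…,j in each of the two copies of {1,…,n}, and let H be two disjoint copies of K_n together with one additional vertex adjacent to j fixed vertices in each copy. Then G and H are singularly cospectral but not cospectral. -/
/-!
After relabelling the vertices, both adjacency matrices take the form `[[W, v], [vᵀ, 0]]` with
the same apex column `v = (u, u)`, where `W = [[0, K], [K, 0]]` for the double cover and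
`W = [[K, 0], [0, K]]` for the two copies of `K_n`, `K` being the adjacency matrix of `K_n`.
Both choices of `W` square to `[[K², 0], [0, K²]]` and map `v` to `(Ku, Ku)`, so the two
adjacency matrices have the same square; for symmetric matrices this forces equal multisets of
absolute eigenvalues. The traces of their cubes differ by `tr W³`, that is by
`2 tr K³ = 2n(n-1)(n-2) ≠ 0`, so the spectra differ.
-/

open Matrix Polynomial

namespace Matrix

section Spectral
variable {m : Type*} [Fintype m] [DecidableEq m] {A B : Matrix m m ℝ}

theorem IsHermitian.roots_charpoly_pow (hA : A.IsHermitian) (k : ℕ) :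
    (A ^ k).charpoly.roots = A.charpoly.roots.map (· ^ k) := by
  have hD : (A ^ k).charpoly =
      ((Finset.univ.val.map fun i => hA.eigenvalues i ^ k).map (X - C ·)).prod := by
    conv_lhs => rw [hA.spectral_theorem, ← map_pow, Unitary.conjStarAlgAut_apply,
      charpoly_mul_comm, ← mul_assoc]
    simp [charpoly_diagonal, diagonal_pow, Multiset.map_map]
  rw [hD, roots_multiset_prod_X_sub_C, hA.roots_charpoly_eq_eigenvalues, Multiset.map_map]
  rfl

theorem IsHermitian.trace_pow_eq_sum_roots_charpoly (hA : A.IsHermitian) (k : ℕ) :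
    (A ^ k).trace = (A.charpoly.roots.map (· ^ k)).sum := by
  rw [trace_eq_sum_roots_charpoly_of_splits (hA.pow k).splits_charpoly, hA.roots_charpoly_pow]

theorem IsHermitian.map_abs_roots_charpoly_eq_of_sq_eq (hA : A.IsHermitian) (hB : B.IsHermitian)
    (h : A ^ 2 = B ^ 2) : A.charpoly.roots.map abs = B.charpoly.roots.map abs := by
  have habs (s : Multiset ℝ) : s.map abs = (s.map (· ^ 2)).map Real.sqrt := by
    simp [Multiset.map_map, Real.sqrt_sq_eq_abs]
  rw [habs, habs, ← hA.roots_charpoly_pow, ← hB.roots_charpoly_pow, h]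

end Spectral

theorem trace_fromBlocks {R p q : Type*} [AddCommMonoid R] [Fintype p] [Fintype q]
    (A : Matrix p p R) (B : Matrix p q R) (C : Matrix q p R) (D : Matrix q q R) :
    (fromBlocks A B C D).trace = A.trace + D.trace := by
  simp [trace, Fintype.sum_sum_type]

section Cone

variable {R p q : Type*} [CommRing R]

def coneMatrix (W : Matrix p p R) (v : Matrix p q R) : Matrix (p ⊕ q) (p ⊕ q) R :=
  fromBlocks W v vᵀ 0

variable {W W₁ W₂ : Matrix p p R} {v : Matrix p q R}

theorem IsSymm.coneMatrix (hW : W.IsSymm) : (coneMatrix W v).IsSymm :=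
  hW.fromBlocks rfl isSymm_zero

variable [Fintype p] [Fintype q] [DecidableEq p] [DecidableEq q]

theorem coneMatrix_sq_eq_coneMatrix_sq (hW₁ : W₁.IsSymm) (hW₂ : W₂.IsSymm)
    (hsq : W₁ ^ 2 = W₂ ^ 2) (hv : W₁ * v = W₂ * v) :
    coneMatrix W₁ v ^ 2 = coneMatrix W₂ v ^ 2 := by
  have hv' : vᵀ * W₁ = vᵀ * W₂ := by
    simpa [transpose_mul, hW₁.eq, hW₂.eq] using congrArg transpose hv
  simp only [coneMatrix, sq, fromBlocks_multiply] at hsq ⊢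
  rw [hsq, hv, hv']

theorem trace_coneMatrix_pow_three (W : Matrix p p R) (v : Matrix p q R) :
    (coneMatrix W v ^ 3).trace = (W ^ 3).trace + 3 * (vᵀ * W * v).trace := by
  simp only [coneMatrix, pow_succ, pow_zero, Matrix.one_mul, fromBlocks_multiply,
    trace_fromBlocks, Matrix.mul_zero, Matrix.zero_mul, add_zero, Matrix.add_mul, trace_add]
  rw [trace_mul_cycle v, trace_mul_comm (W * v), ← Matrix.mul_assoc]
  ring

theorem trace_coneMatrix_pow_three_sub (hv : W₁ * v = W₂ * v) :
    (coneMatrix W₁ v ^ 3).trace - (coneMatrix W₂ v ^ 3).trace =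
      (W₁ ^ 3).trace - (W₂ ^ 3).trace := by
  rw [trace_coneMatrix_pow_three, trace_coneMatrix_pow_three, Matrix.mul_assoc,
    Matrix.mul_assoc, hv]
  ring

end Cone

section DoubleCover

variable {R p q : Type*} [CommRing R] {B : Matrix p p R}

theorem isSymm_fromBlocks_zero_self (hB : B.IsSymm) : (fromBlocks 0 B B 0).IsSymm :=
  isSymm_zero.fromBlocks hB.eq isSymm_zero

theorem isSymm_fromBlocks_self_zero (hB : B.IsSymm) : (fromBlocks B 0 0 B).IsSymm :=
  hB.fromBlocks transpose_zero hB

variable [Fintype p] (B)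

theorem fromBlocks_zero_self_mul_fromRows (u : Matrix p q R) :
    fromBlocks 0 B B 0 * fromRows u u = fromBlocks B 0 0 B * fromRows u u := by
  simp [fromBlocks_mul_fromRows]

variable [DecidableEq p] [Fintype q] [DecidableEq q]

theorem fromBlocks_zero_self_sq : fromBlocks 0 B B 0 ^ 2 = fromBlocks B 0 0 B ^ 2 := by
  simp [sq, fromBlocks_multiply]

theorem trace_fromBlocks_zero_self_pow_three : (fromBlocks 0 B B 0 ^ 3).trace = 0 := by
  simp [pow_succ, fromBlocks_multiply, trace_fromBlocks]

theorem trace_fromBlocks_self_zero_pow_three :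
    (fromBlocks B 0 0 B ^ 3).trace = 2 * (B ^ 3).trace := by
  simp [pow_succ, fromBlocks_multiply, trace_fromBlocks]
  ring

theorem coneMatrix_fromBlocks_zero_self_sq (hB : B.IsSymm) (u : Matrix p q R) :
    coneMatrix (fromBlocks 0 B B 0) (fromRows u u) ^ 2 =
      coneMatrix (fromBlocks B 0 0 B) (fromRows u u) ^ 2 :=
  coneMatrix_sq_eq_coneMatrix_sq (isSymm_fromBlocks_zero_self hB)
    (isSymm_fromBlocks_self_zero hB)
    (fromBlocks_zero_self_sq B) (fromBlocks_zero_self_mul_fromRows B u)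

theorem trace_coneMatrix_fromBlocks_pow_three_sub (u : Matrix p q R) :
    (coneMatrix (fromBlocks 0 B B 0) (fromRows u u) ^ 3).trace -
      (coneMatrix (fromBlocks B 0 0 B) (fromRows u u) ^ 3).trace = -2 * (B ^ 3).trace := by
  rw [trace_coneMatrix_pow_three_sub (fromBlocks_zero_self_mul_fromRows B u),
    trace_fromBlocks_zero_self_pow_three, trace_fromBlocks_self_zero_pow_three]
  ring

end DoubleCover

end Matrix

theorem SimpleGraph.trace_adjMatrix_completeGraph_pow_three {R V : Type*} [CommRing R]
    [Fintype V] [DecidableEq V] :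
    ((completeGraph V).adjMatrix R ^ 3).trace =
      Fintype.card V * (Fintype.card V - 1) * (Fintype.card V - 2) := by
  set J : Matrix V V R := of 1
  have hJJ : J * J = (Fintype.card V : R) • J := by ext; simp [J, mul_apply]
  have hJ : J.trace = Fintype.card V := by simp [J, trace]
  have hcube : (J - 1) ^ 3 = J * J * J - (3 : ℕ) • (J * J) + (3 : ℕ) • J - 1 := by
    noncomm_ring
  rw [adjMatrix_completeGraph_eq_of_one_sub_one, hcube, hJJ, smul_mul, hJJ]
  simp only [trace_sub, trace_add, trace_smul, trace_one, hJ, smul_eq_mul]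
  simp only [nsmul_eq_mul, Nat.cast_ofNat]
  ring

def prefixIndicator (n j : ℕ) : Matrix (Fin n) Unit ℝ :=
  of fun a _ => if (a : ℕ) < j then 1 else 0

theorem exists_perm_val_lt_iff_mem {n j : ℕ} (hjn : j ≤ n) {S : Finset (Fin n)}
    (hS : S.card = j) :
    ∃ σ : Equiv.Perm (Fin n), ∀ a, ((σ a : Fin n) : ℕ) < j ↔ a ∈ S := by
  obtain ⟨σ, hσ⟩ := Equiv.Perm.exists_map_finset_eq S {a | (a : ℕ) < j}
    (by rw [Fin.card_filter_val_lt, hS]; omega)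
  refine ⟨σ, fun a => ?_⟩
  rw [← Finset.mem_map' σ.toEmbedding, hσ]
  simp

theorem adjMat_doubleCoverCompleteWithApex (n j : ℕ) :
    (doubleCoverCompleteWithApex n j).adjMat =
      reindex (Equiv.optionEquivSumPUnit _).symm (Equiv.optionEquivSumPUnit _).symm
        (coneMatrix (fromBlocks 0 ((SimpleGraph.completeGraph (Fin n)).adjMatrix ℝ)
            ((SimpleGraph.completeGraph (Fin n)).adjMatrix ℝ) 0)
          (fromRows (prefixIndicator n j) (prefixIndicator n j))) := by
  ext x y
  simp only [SimpleGraph.adjMat, SimpleGraph.adjMatrix_apply, reindex_apply, submatrix_apply]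
  rcases x with _ | (a | a) <;> rcases y with _ | (b | b) <;>
    simp [doubleCoverCompleteWithApex, coneMatrix, prefixIndicator, eq_comm]

theorem adjMat_twoCompleteWithApex {n j : ℕ} {S₁ S₂ : Finset (Fin n)}
    {σ₁ σ₂ : Equiv.Perm (Fin n)} (hσ₁ : ∀ a, ((σ₁ a : Fin n) : ℕ) < j ↔ a ∈ S₁)
    (hσ₂ : ∀ a, ((σ₂ a : Fin n) : ℕ) < j ↔ a ∈ S₂) :
    (twoCompleteWithApex n S₁ S₂).adjMat =
      reindex
        ((Equiv.optionEquivSumPUnit _).trans ((σ₁.sumCongr σ₂).sumCongr (.refl Unit))).symm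
        ((Equiv.optionEquivSumPUnit _).trans ((σ₁.sumCongr σ₂).sumCongr (.refl Unit))).symm
        (coneMatrix (fromBlocks ((SimpleGraph.completeGraph (Fin n)).adjMatrix ℝ) 0 0
            ((SimpleGraph.completeGraph (Fin n)).adjMatrix ℝ))
          (fromRows (prefixIndicator n j) (prefixIndicator n j))) := by
  ext x y
  simp only [SimpleGraph.adjMat, SimpleGraph.adjMatrix_apply, reindex_apply, submatrix_apply]
  rcases x with _ | (a | a) <;> rcases y with _ | (b | b) <;>
    simp [twoCompleteWithApex, coneMatrix, prefixIndicator, hσ₁, hσ₂, eq_comm]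

theorem doubleCoverCompleteWithApex_singularlyCospectral_not_cospectral_general
    (n j : ℕ) (hn : 3 ≤ n) (hjn : j ≤ n)
    (S₁ S₂ : Finset (Fin n)) (hS₁ : S₁.card = j) (hS₂ : S₂.card = j) :
    SingularlyCospectral (doubleCoverCompleteWithApex n j) (twoCompleteWithApex n S₁ S₂) ∧
    (doubleCoverCompleteWithApex n j).eigMultiset ≠
      (twoCompleteWithApex n S₁ S₂).eigMultiset := by
  obtain ⟨σ₁, hσ₁⟩ := exists_perm_val_lt_iff_mem hjn hS₁
  obtain ⟨σ₂, hσ₂⟩ := exists_perm_val_lt_iff_mem hjn hS₂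
  set K := (SimpleGraph.completeGraph (Fin n)).adjMatrix ℝ
  set u := prefixIndicator n j
  have hK : K.IsSymm := SimpleGraph.isSymm_adjMatrix _
  have hG : (doubleCoverCompleteWithApex n j).eigMultiset =
      (coneMatrix (fromBlocks 0 K K 0) (fromRows u u)).charpoly.roots := by
    rw [SimpleGraph.eigMultiset, adjMat_doubleCoverCompleteWithApex, charpoly_reindex]
  have hH : (twoCompleteWithApex n S₁ S₂).eigMultiset =
      (coneMatrix (fromBlocks K 0 0 K) (fromRows u u)).charpoly.roots := by
    rw [SimpleGraph.eigMultiset, adjMat_twoCompleteWithApex hσ₁ hσ₂, charpoly_reindex]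
  have hGherm := isHermitian_iff_isSymm.mpr
    ((isSymm_fromBlocks_zero_self hK).coneMatrix (v := fromRows u u))
  have hHherm := isHermitian_iff_isSymm.mpr
    ((isSymm_fromBlocks_self_zero hK).coneMatrix (v := fromRows u u))
  refine ⟨?_, fun h => ?_⟩
  · rw [SingularlyCospectral, SimpleGraph.nzSingVals, SimpleGraph.nzSingVals, hG, hH,
      hGherm.map_abs_roots_charpoly_eq_of_sq_eq hHherm (coneMatrix_fromBlocks_zero_self_sq K hK u)]
  · have htr := trace_coneMatrix_fromBlocks_pow_three_sub K u
    rw [hGherm.trace_pow_eq_sum_roots_charpoly, hHherm.trace_pow_eq_sum_roots_charpoly, ← hG,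
      ← hH, h, sub_self, SimpleGraph.trace_adjMatrix_completeGraph_pow_three,
      Fintype.card_fin] at htr
    have hn' : (3 : ℝ) ≤ n := by exact_mod_cast hn
    have hpos : 0 < (n : ℝ) * (n - 1) * (n - 2) := by
      apply mul_pos (mul_pos _ _) <;> linarith
    linarith

/-- Let `n ≥ 3` and `1 ≤ j ≤ n`.  Let `G` be the bipartite double cover of `K_n`
together with one additional vertex adjacent to the vertices `1, …, j` in each of the
two copies, and let `H` be two disjoint copies of `K_n` together with one additional
vertex adjacent to `j` fixed vertices in each copy.  Then `G` and `H` are singularly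
cospectral but not cospectral. -/
theorem doubleCoverCompleteWithApex_singularlyCospectral_not_cospectral
    (n j : ℕ) (hn : 3 ≤ n) (hj1 : 1 ≤ j) (hjn : j ≤ n)
    (S₁ S₂ : Finset (Fin n)) (hS₁ : S₁.card = j) (hS₂ : S₂.card = j) :
    SingularlyCospectral (doubleCoverCompleteWithApex n j) (twoCompleteWithApex n S₁ S₂) ∧
    (doubleCoverCompleteWithApex n j).eigMultiset ≠
      (twoCompleteWithApex n S₁ S₂).eigMultiset :=
  doubleCoverCompleteWithApex_singularlyCospectral_not_cospectral_general n j hn hjn S₁ S₂ hS₁ hS₂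
end

section
/- Fix integers n ≥ 3 and 1 ≤ j ≤ n, and let Q_{n,j}(x) = x(x+1)(x−(n−1)) − 2j(x−(n−1−j)). Then Q_{n,j} has three real roots λ_3 ≤ λ_2 ≤ λ_1 satisfying λ_1 > 0 and λ_3 < 0; moreover λ_2 > 0 if 1 ≤ j ≤ n−2, λ_2 = 0 if j = n−1, and λ_2 < 0 if j = n. -/
open Matrix Polynomial

noncomputable def qf (n j : ℕ) : ℝ → ℝ := fun x =>
  x * (x + 1) * (x - ((n : ℝ) - 1)) - 2 * (j : ℝ) * (x - ((n : ℝ) - 1 - (j : ℝ)))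

lemma qf_eval (n j : ℕ) (x : ℝ) : (Qpoly n j).eval x = qf n j x := by
  simp [Qpoly, qf]

lemma qf_cont (n j : ℕ) : Continuous (qf n j) := by unfold qf; fun_prop

lemma ivt_neg_pos {f : ℝ → ℝ} (hf : Continuous f) {a b : ℝ} (hab : a ≤ b)
    (ha : f a < 0) (hb : 0 < f b) : ∃ x, a < x ∧ x < b ∧ f x = 0 := by
  obtain ⟨x, hx, hfx⟩ := intermediate_value_Icc hab hf.continuousOn ⟨ha.le, hb.le⟩
  refine ⟨x, hx.1.lt_of_ne ?_, (lt_of_le_of_ne hx.2 ?_), hfx⟩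
  · rintro rfl; exact ha.ne hfx
  · rintro rfl; exact hb.ne' hfx

lemma ivt_pos_neg {f : ℝ → ℝ} (hf : Continuous f) {a b : ℝ} (hab : a ≤ b)
    (ha : 0 < f a) (hb : f b < 0) : ∃ x, a < x ∧ x < b ∧ f x = 0 := by
  obtain ⟨x, hx, hfx⟩ := intermediate_value_Icc' hab hf.continuousOn ⟨hb.le, ha.le⟩
  refine ⟨x, hx.1.lt_of_ne ?_, (lt_of_le_of_ne hx.2 ?_), hfx⟩
  · rintro rfl; exact ha.ne' hfx
  · rintro rfl; exact hb.ne hfx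

lemma roots_three (p : Polynomial ℝ) (hp : p ≠ 0) (hd : p.natDegree ≤ 3)
    {a b c : ℝ} (hab : a ≠ b) (hac : a ≠ c) (hbc : b ≠ c)
    (ha : p.IsRoot a) (hb : p.IsRoot b) (hc : p.IsRoot c) :
    p.roots = {a, b, c} := by
  have hcard : p.roots.card ≤ 3 := (p.card_roots').trans hd
  have hone : ∀ y : ℝ, p.IsRoot y → 1 ≤ p.roots.count y := by
    intro y hy
    rw [Polynomial.count_roots]
    exact (Polynomial.rootMultiplicity_pos hp).mpr hy
  have hsub : ({a, b, c} : Multiset ℝ) ≤ p.roots := by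
    rw [Multiset.le_iff_count]
    intro x
    by_cases hxa : x = a
    · subst hxa
      have h1 : Multiset.count x ({x, b, c} : Multiset ℝ) = 1 := by
        simp [Multiset.count_cons, Multiset.count_singleton, hab, hac]
      rw [h1]; exact hone x ha
    by_cases hxb : x = b
    · subst hxb
      have h1 : Multiset.count x ({a, x, c} : Multiset ℝ) = 1 := by
        simp [Multiset.count_cons, Multiset.count_singleton, Ne.symm hab, hbc]
      rw [h1]; exact hone x hb
    by_cases hxc : x = c
    · subst hxc
      have h1 : Multiset.count x ({a, b, x} : Multiset ℝ) = 1 := by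
        simp [Multiset.count_cons, Multiset.count_singleton, Ne.symm hac, Ne.symm hbc]
      rw [h1]; exact hone x hc
    · have h0 : Multiset.count x ({a, b, c} : Multiset ℝ) = 0 := by
        simp [Multiset.count_cons, Multiset.count_singleton, hxa, hxb, hxc]
      rw [h0]; exact Nat.zero_le _
  exact (Multiset.eq_of_le_of_card_le hsub (by simpa using hcard)).symm

/-- For `n ≥ 3` and `1 ≤ j ≤ n`, the cubic `Q_{n,j}` has three real roots
`λ₃ ≤ λ₂ ≤ λ₁` (with multiplicity) with `λ₁ > 0` and `λ₃ < 0`; moreover `λ₂ > 0` if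
`j ≤ n - 2`, `λ₂ = 0` if `j = n - 1`, and `λ₂ < 0` if `j = n`. -/
theorem Qpoly_roots (n j : ℕ) (hn : 3 ≤ n) (hj1 : 1 ≤ j) (hjn : j ≤ n) :
    ∃ l₁ l₂ l₃ : ℝ, l₃ ≤ l₂ ∧ l₂ ≤ l₁ ∧
      (Qpoly n j).roots = {l₁, l₂, l₃} ∧
      0 < l₁ ∧ l₃ < 0 ∧
      (j ≤ n - 2 → 0 < l₂) ∧ (j = n - 1 → l₂ = 0) ∧ (j = n → l₂ < 0) := by
  have hN : (3 : ℝ) ≤ (n : ℝ) := by exact_mod_cast hn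
  have hJ1 : (1 : ℝ) ≤ (j : ℝ) := by exact_mod_cast hj1
  have hJN : (j : ℝ) ≤ (n : ℝ) := by exact_mod_cast hjn
  have t1 : (0:ℝ) ≤ (n:ℝ) - 3 := by linarith
  have t2 : (0:ℝ) ≤ (j:ℝ) - 1 := by linarith
  have hfc := qf_cont n j
  have h1a : qf n j ((n:ℝ) - 1) < 0 := by
    simp only [qf]; nlinarith
  have h1b : 0 < qf n j ((n:ℝ) + 2 * (j:ℝ)) := by
    simp only [qf]
    nlinarith [mul_nonneg t1 t2, mul_nonneg (mul_nonneg t1 t1) t2,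
      mul_nonneg (mul_nonneg t1 t2) t2, mul_nonneg (mul_nonneg t1 t1) t1,
      mul_nonneg (mul_nonneg t2 t2) t2, sq_nonneg ((n:ℝ) - 3), sq_nonneg ((j:ℝ) - 1)]
  have hne : Qpoly n j ≠ 0 := by
    intro h
    have := qf_eval n j ((n:ℝ) - 1)
    rw [h, Polynomial.eval_zero] at this
    rw [← this] at h1a; exact lt_irrefl 0 h1a
  have hdeg : (Qpoly n j).natDegree ≤ 3 := by
    unfold Qpoly; compute_degree
  obtain ⟨l₁, hl₁a, hl₁b, hl₁0⟩ := ivt_neg_pos hfc (by linarith) h1a h1b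
  have hl₁pos : (0 : ℝ) < l₁ := by linarith
  have hroot₁ : (Qpoly n j).IsRoot l₁ := by
    rw [Polynomial.IsRoot, qf_eval]; exact hl₁0
  have h3a : qf n j (-(1 + 2 * (j:ℝ))) < 0 := by
    simp only [qf]
    nlinarith [mul_pos (mul_pos (show (0:ℝ) < (j:ℝ) by linarith)
      (show (0:ℝ) < (j:ℝ) by linarith))
      (show (0:ℝ) < 1 + 4 * (j:ℝ) + 2 * (n:ℝ) by linarith)]
  have hcases : j ≤ n - 2 ∨ j = n - 1 ∨ j = n := by omega
  rcases hcases with hA | hB | hC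
  · -- case 1 ≤ j ≤ n - 2
    have hJ2 : (j:ℝ) + 2 ≤ (n:ℝ) := by
      have h : j + 2 ≤ n := by omega
      exact_mod_cast h
    have h2a : 0 < qf n j 0 := by
      simp only [qf]
      nlinarith [mul_pos (show (0:ℝ) < (j:ℝ) by linarith)
        (show (0:ℝ) < (n:ℝ) - 1 - (j:ℝ) by linarith)]
    obtain ⟨l₂, hl₂a, hl₂b, hl₂0⟩ := ivt_pos_neg hfc (by linarith) h2a h1a
    have h3b : 0 < qf n j (-1) := by
      simp only [qf]
      nlinarith [mul_pos (show (0:ℝ) < (j:ℝ) by linarith)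
        (show (0:ℝ) < (n:ℝ) - (j:ℝ) by linarith)]
    obtain ⟨l₃, hl₃a, hl₃b, hl₃0⟩ := ivt_neg_pos hfc (by linarith) h3a h3b
    refine ⟨l₁, l₂, l₃, by linarith, by linarith, ?_, hl₁pos, by linarith, fun _ => hl₂a,
      fun h => absurd h (by omega), fun h => absurd h (by omega)⟩
    exact roots_three _ hne hdeg (by linarith) (by linarith) (by linarith) hroot₁
      (by rw [Polynomial.IsRoot, qf_eval]; exact hl₂0)
      (by rw [Polynomial.IsRoot, qf_eval]; exact hl₃0)
  · -- case j = n - 1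
    have hJeq : (j:ℝ) = (n:ℝ) - 1 := by
      have h : j + 1 = n := by omega
      have h' : (j : ℝ) + 1 = (n : ℝ) := by exact_mod_cast h
      linarith
    have h2 : qf n j 0 = 0 := by
      simp only [qf]; rw [hJeq]; ring
    have h3b : 0 < qf n j (-1) := by
      simp only [qf]; rw [hJeq]; nlinarith
    obtain ⟨l₃, hl₃a, hl₃b, hl₃0⟩ := ivt_neg_pos hfc (by linarith) h3a h3b
    refine ⟨l₁, 0, l₃, by linarith, by linarith, ?_, hl₁pos, by linarith,
      fun h => absurd h (by omega), fun _ => rfl, fun h => absurd h (by omega)⟩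
    exact roots_three _ hne hdeg (by linarith) (by linarith) (by linarith) hroot₁
      (by rw [Polynomial.IsRoot, qf_eval]; exact h2)
      (by rw [Polynomial.IsRoot, qf_eval]; exact hl₃0)
  · -- case j = n
    have hJeq : (j:ℝ) = (n:ℝ) := by rw [hC]
    have h2 : qf n j (-1) = 0 := by
      simp only [qf]; rw [hJeq]; ring
    have h3a' : qf n j (-2) < 0 := by
      simp only [qf]; rw [hJeq]; nlinarith
    have h3b : 0 < qf n j (-(3/2)) := by
      simp only [qf]; rw [hJeq]; nlinarith
    obtain ⟨l₃, hl₃a, hl₃b, hl₃0⟩ := ivt_neg_pos hfc (by norm_num) h3a' h3b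
    refine ⟨l₁, -1, l₃, by linarith, by linarith, ?_, hl₁pos, by linarith,
      fun h => absurd h (by omega), fun h => absurd h (by omega), fun _ => by norm_num⟩
    exact roots_three _ hne hdeg (by linarith) (by linarith) (by linarith) hroot₁
      (by rw [Polynomial.IsRoot, qf_eval]; exact h2)
      (by rw [Polynomial.IsRoot, qf_eval]; exact hl₃0)
end

section
/- Let G and H be finite simple graphs with the same number of vertices, with G a d-regular graph and H not regular (H has two vertices of different degrees). Then G and H are not singularly cospectral. -/
open Matrix Polynomial

/-
Singular cospectrality preserves `∑ σ² = tr A² = ∑_v deg v`, so `H` has average degree `d`.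
It also makes every singular value of `H` one of `G`, hence at most `d` by Gershgorin; so
`d² - A_H²` is positive semidefinite, and evaluating it at the all-ones vector gives
`∑_v (deg v)² ≤ n d²`. With `∑_v deg v = n d` this forces every degree of `H` to be `d`.
-/

open scoped MatrixOrder ComplexOrder

namespace Matrix.IsHermitian

variable {n 𝕜 : Type*} [Fintype n] [DecidableEq n] [RCLike 𝕜] {A : Matrix n n 𝕜}

theorem trace_cfc (hA : A.IsHermitian) (f : ℝ → ℝ) :
    (cfc f A).trace = ∑ i, (f (hA.eigenvalues i) : 𝕜) := by
  rw [cfc_eq hA, IsHermitian.cfc, Unitary.conjStarAlgAut_apply, trace_mul_cycle,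
    Unitary.coe_star_mul_self, Matrix.one_mul, trace_diagonal]
  rfl

theorem trace_mul_self (hA : A.IsHermitian) :
    (A * A).trace = ∑ i, (hA.eigenvalues i : 𝕜) ^ 2 := by
  rw [← sq, ← cfc_pow_id (R := ℝ) A 2 hA.isSelfAdjoint, hA.trace_cfc]
  push_cast
  rfl

theorem posSemidef_cfc (hA : A.IsHermitian) {f : ℝ → ℝ} (hf : ∀ i, 0 ≤ f (hA.eigenvalues i)) :
    (cfc f A).PosSemidef := by
  rw [← nonneg_iff_posSemidef]
  refine cfc_nonneg fun x hx => ?_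
  rw [hA.spectrum_real_eq_range_eigenvalues] at hx
  obtain ⟨i, rfl⟩ := hx
  exact hf i

theorem posSemidef_smul_one_sub_mul_self (hA : A.IsHermitian) {c : ℝ}
    (hc : ∀ i, hA.eigenvalues i ^ 2 ≤ c) : (c • (1 : Matrix n n 𝕜) - A * A).PosSemidef := by
  have hcfc : c • (1 : Matrix n n 𝕜) - A * A = cfc (fun x : ℝ => c - x ^ 2) A := by
    rw [cfc_sub (fun _ => c) (fun x : ℝ => x ^ 2) A, cfc_const c A, cfc_pow_id A 2, sq,
      Algebra.algebraMap_eq_smul_one]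
  rw [hcfc]
  exact hA.posSemidef_cfc fun i => sub_nonneg.mpr (hc i)

theorem star_mulVec_dotProduct_mulVec_le (hA : A.IsHermitian) {c : ℝ}
    (hc : ∀ i, hA.eigenvalues i ^ 2 ≤ c) (x : n → 𝕜) :
    star (A *ᵥ x) ⬝ᵥ (A *ᵥ x) ≤ c • (star x ⬝ᵥ x) := by
  have hquad := (hA.posSemidef_smul_one_sub_mul_self hc).dotProduct_mulVec_nonneg x
  rw [sub_mulVec, smul_mulVec, one_mulVec, dotProduct_sub, dotProduct_smul, ← mulVec_mulVec,
    dotProduct_mulVec, sub_nonneg] at hquad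
  rwa [star_mulVec, hA.eq]

end Matrix.IsHermitian

open Finset in
theorem Finset.eq_of_sum_eq_of_sum_sq_le {ι : Type*} {s : Finset ι} {f : ι → ℝ} {d : ℝ}
    (hsum : ∑ i ∈ s, f i = #s * d) (hsq : ∑ i ∈ s, f i ^ 2 ≤ #s * d ^ 2) :
    ∀ i ∈ s, f i = d := by
  have hdev : ∑ i ∈ s, (f i - d) ^ 2 ≤ 0 := by
    calc ∑ i ∈ s, (f i - d) ^ 2
        = ∑ i ∈ s, f i ^ 2 - 2 * d * ∑ i ∈ s, f i + #s * d ^ 2 := by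
          have hexpand : ∀ i, (f i - d) ^ 2 = f i ^ 2 - 2 * d * f i + d ^ 2 := fun i => by ring
          simp_rw [hexpand, sum_add_distrib, sum_sub_distrib, ← mul_sum, sum_const, nsmul_eq_mul]
      _ ≤ 0 := by rw [hsum]; linarith
  have hzero := (sum_eq_zero_iff_of_nonneg fun i _ => sq_nonneg (f i - d)).mp
    (le_antisymm hdev (sum_nonneg fun i _ => sq_nonneg _))
  exact fun i hi => sub_eq_zero.mp (pow_eq_zero_iff two_ne_zero |>.mp (hzero i hi))

namespace SimpleGraph

variable {V : Type*} [Fintype V] (G : SimpleGraph V)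

theorem adjMat_eq [DecidableRel G.Adj] : G.adjMat = G.adjMatrix ℝ := by
  unfold adjMat
  congr

theorem isHermitian_adjMat_s14 : G.adjMat.IsHermitian := by
  classical
  simp [G.adjMat_eq, G.isSymm_adjMatrix]

theorem trace_adjMatrix_mul_self [DecidableRel G.Adj] :
    (G.adjMatrix ℝ * G.adjMatrix ℝ).trace = ∑ v, (G.degree v : ℝ) :=
  Finset.sum_congr rfl fun v _ => G.adjMatrix_mul_self_apply_self v

theorem sum_adjMatrix_apply [DecidableRel G.Adj] (v : V) :
    ∑ w, G.adjMatrix ℝ v w = G.degree v := by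
  simpa [mulVec, dotProduct] using G.adjMatrix_mulVec_const_apply (α := ℝ) (a := 1) (v := v)

variable [DecidableEq V]

theorem eigMultiset_eq :
    G.eigMultiset = Finset.univ.val.map G.isHermitian_adjMat_s14.eigenvalues := by
  rw [eigMultiset, G.isHermitian_adjMat_s14.roots_charpoly_eq_eigenvalues]
  rfl

theorem mem_nzSingVals {x : ℝ} :
    x ∈ G.nzSingVals ↔ x ≠ 0 ∧ ∃ i, |G.isHermitian_adjMat_s14.eigenvalues i| = x := by
  simp [nzSingVals, eigMultiset_eq, and_comm]

variable [DecidableRel G.Adj]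

theorem sum_map_sq_nzSingVals :
    (G.nzSingVals.map (· ^ 2)).sum = ∑ v, (G.degree v : ℝ) := by
  set μ := G.isHermitian_adjMat_s14.eigenvalues
  rw [← trace_adjMatrix_mul_self, ← adjMat_eq, G.isHermitian_adjMat_s14.trace_mul_self, nzSingVals,
    eigMultiset_eq, Multiset.map_map, Multiset.filter_map (p := fun x => x ≠ 0), Multiset.map_map]
  calc _ = ∑ i with |μ i| ≠ 0, |μ i| ^ 2 := rfl
    _ = ∑ i, |μ i| ^ 2 := Finset.sum_filter_of_ne fun i _ hi => by simpa using hi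
    _ = ∑ i, μ i ^ 2 := by simp_rw [sq_abs]

theorem abs_eigenvalues_le_of_degree_le {d : ℕ} (h : ∀ v, G.degree v ≤ d) (i : V) :
    |G.isHermitian_adjMat_s14.eigenvalues i| ≤ d := by
  have hμ : Module.End.HasEigenvalue (toLin' G.adjMat) (G.isHermitian_adjMat_s14.eigenvalues i) := by
    rw [Module.End.hasEigenvalue_iff_mem_spectrum, spectrum_toLin']
    exact G.isHermitian_adjMat_s14.eigenvalues_mem_spectrum_real i
  obtain ⟨v, hv⟩ := eigenvalue_mem_ball hμ
  have hrow : ∑ w ∈ Finset.univ.erase v, ‖G.adjMat v w‖ = G.degree v := by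
    rw [Finset.sum_erase _ (by simp [adjMat_eq]), ← sum_adjMatrix_apply]
    refine Finset.sum_congr rfl fun w _ => ?_
    rw [adjMat_eq, Real.norm_of_nonneg (by rw [adjMatrix_apply]; positivity)]
  have hdiag : G.adjMat v v = 0 := by simp [adjMat_eq]
  rw [Metric.mem_closedBall, hrow, hdiag, dist_zero_right, Real.norm_eq_abs] at hv
  exact hv.trans (by exact_mod_cast h v)

theorem le_of_mem_nzSingVals_of_degree_le {d : ℕ} (h : ∀ v, G.degree v ≤ d) {x : ℝ}
    (hx : x ∈ G.nzSingVals) : x ≤ d := by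
  obtain ⟨-, i, rfl⟩ := G.mem_nzSingVals.mp hx
  exact G.abs_eigenvalues_le_of_degree_le h i

theorem sum_degree_sq_le {c : ℝ} (hc : ∀ x ∈ G.nzSingVals, x ≤ c) :
    ∑ v, (G.degree v : ℝ) ^ 2 ≤ Fintype.card V * c ^ 2 := by
  have hμ : ∀ i, G.isHermitian_adjMat_s14.eigenvalues i ^ 2 ≤ c ^ 2 := by
    intro i
    by_cases h0 : G.isHermitian_adjMat_s14.eigenvalues i = 0
    · simp [h0, sq_nonneg]
    · rw [← sq_abs]
      exact pow_le_pow_left₀ (abs_nonneg _) (hc _ (G.mem_nzSingVals.mpr ⟨by simpa, i, rfl⟩)) 2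
  have hdeg : G.adjMat *ᵥ 1 = fun v => (G.degree v : ℝ) := by
    ext v
    simp [adjMat_eq]
  simpa [hdeg, dotProduct, sq, mul_comm] using
    G.isHermitian_adjMat_s14.star_mulVec_dotProduct_mulVec_le hμ 1

end SimpleGraph

/-- If `G` and `H` have the same number of vertices, `G` is `d`-regular and `H` is not
regular (it has two vertices of different degrees), then `G` and `H` are not singularly
cospectral. -/
theorem not_singularlyCospectral_of_regular_of_not_regular
    {V W : Type*} [Fintype V] [DecidableEq V] [Fintype W] [DecidableEq W]
    (G : SimpleGraph V) (H : SimpleGraph W) [DecidableRel G.Adj] [DecidableRel H.Adj]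
    (hcard : Fintype.card V = Fintype.card W)
    (d : ℕ) (hG : G.IsRegularOfDegree d)
    (hH : ∃ v w : W, H.degree v ≠ H.degree w) :
    ¬ SingularlyCospectral G H := by
  intro hcospec
  have hsum : ∑ v, (H.degree v : ℝ) = Fintype.card W * d := by
    rw [← H.sum_map_sq_nzSingVals, ← hcospec, G.sum_map_sq_nzSingVals]
    simp [hG _, hcard]
  have hsq : ∑ v, (H.degree v : ℝ) ^ 2 ≤ Fintype.card W * d ^ 2 :=
    H.sum_degree_sq_le fun x hx =>
      G.le_of_mem_nzSingVals_of_degree_le (fun v => (hG v).le) (hcospec ▸ hx)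
  have hreg : ∀ v, H.degree v = d := fun v => by
    exact_mod_cast Finset.eq_of_sum_eq_of_sum_sq_le hsum hsq v (Finset.mem_univ v)
  obtain ⟨v, w, hvw⟩ := hH
  exact hvw ((hreg v).trans (hreg w).symm)
end

section
/- Let G and H be finite simple bipartite graphs that are singularly cospectral. Then G and H are almost cospectral, i.e., the multisets of nonzero eigenvalues of their adjacency matrices (with multiplicities) coincide. -/
open Matrix Polynomial

/-- Two graphs are almost cospectral if the multisets of their nonzero adjacency
eigenvalues (with multiplicities) coincide. -/
def AlmostCospectral {V W : Type*} [Fintype V] [DecidableEq V] [Fintype W] [DecidableEq W]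
    (G : SimpleGraph V) (H : SimpleGraph W) : Prop :=
  G.eigMultiset.filter (fun x => x ≠ 0) = H.eigMultiset.filter (fun x => x ≠ 0)


-- aux 1: rootMultiplicity under comp (-X)
lemma rootMult_comp_negX (p : ℝ[X]) (hp : p ≠ 0) (x : ℝ) :
    (p.comp (-X)).rootMultiplicity x = p.rootMultiplicity (-x) := by
  have hc : p.comp (-X) ≠ 0 := by
    intro h
    apply hp
    have := congrArg (fun q => q.comp (-X : ℝ[X])) h
    simpa [comp_neg_X_comp_neg_X] using this
  have key : ∀ n : ℕ, (X - C x) ^ n ∣ p.comp (-X) ↔ (X - C (-x)) ^ n ∣ p := by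
    intro n
    have h1 : (algEquivAevalNegX (R := ℝ)) ((X - C (-x)) ^ n) ∣
        (algEquivAevalNegX (R := ℝ)) p ↔ (X - C (-x)) ^ n ∣ p := map_dvd_iff _
    have h2 : (algEquivAevalNegX (R := ℝ)) ((X - C (-x)) ^ n)
        = (-(X - C x)) ^ n := by
      simp [algEquivAevalNegX, sub_comp, neg_comp]
      ring_nf
    have h3 : (algEquivAevalNegX (R := ℝ)) p = p.comp (-X) := rfl
    rw [h2, h3] at h1
    rw [← h1]
    exact (((Associated.refl (X - C x)).neg_left).symm.pow_pow).dvd_iff_dvd_left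
  apply le_antisymm
  · rw [le_rootMultiplicity_iff hp, ← key]
    exact pow_rootMultiplicity_dvd _ _
  · rw [le_rootMultiplicity_iff hc, key]
    exact pow_rootMultiplicity_dvd _ _

-- aux 2: charpoly of -A versus charpoly of A composed with -X
lemma charpoly_comp_negX {n : Type*} [Fintype n] [DecidableEq n] (A : Matrix n n ℝ) :
    A.charpoly.comp (-X) = (-1 : ℝ[X]) ^ (Fintype.card n) * (-A).charpoly := by
  have f : ℝ[X] →+* ℝ[X] := (aeval (-X : ℝ[X])).toRingHom
  rw [comp_eq_aeval]
  have hdet : (aeval (-X : ℝ[X])) A.charpoly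
      = ((charmatrix A).map (aeval (-X : ℝ[X])).toRingHom).det := by
    rw [Matrix.charpoly]
    exact RingHom.map_det _ _
  have hmat : (charmatrix A).map (aeval (-X : ℝ[X])).toRingHom = -(charmatrix (-A)) := by
    ext i j
    by_cases hij : i = j
    · subst hij
      simp [Matrix.map_apply, charmatrix_apply_eq]
      ring
    · simp [Matrix.map_apply, charmatrix_apply_ne _ _ _ hij, hij]
  rw [hdet, hmat, Matrix.det_neg, Matrix.charpoly]

-- aux 3: conjugation by a diagonal involution preserves charpoly
lemma charpoly_diagonal_conj {n : Type*} [Fintype n] [DecidableEq n]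
    (d : n → ℝ) (hd : ∀ i, d i * d i = 1) (A : Matrix n n ℝ) :
    (Matrix.diagonal d * A * Matrix.diagonal d).charpoly = A.charpoly := by
  have hmat : charmatrix (Matrix.diagonal d * A * Matrix.diagonal d)
      = Matrix.diagonal (fun i => (C (d i) : ℝ[X])) * charmatrix A
        * Matrix.diagonal (fun i => (C (d i) : ℝ[X])) := by
    refine Matrix.ext fun i j => ?_
    rw [Matrix.mul_diagonal, Matrix.diagonal_mul]
    by_cases hij : i = j
    · subst hij
      rw [charmatrix_apply_eq, Matrix.mul_diagonal, Matrix.diagonal_mul, charmatrix_apply_eq]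
      have h1 : (C (d i) : ℝ[X]) * C (d i) = 1 := by rw [← C_mul, hd i, C_1]
      have h2 : d i * A i i * d i = A i i := by
        rw [mul_comm (d i) (A i i), mul_assoc, hd i, mul_one]
      rw [h2]
      linear_combination (C (A i i) - X) * h1
    · rw [charmatrix_apply_ne _ _ _ hij, Matrix.mul_diagonal, Matrix.diagonal_mul,
        charmatrix_apply_ne _ _ _ hij, C_mul, C_mul]
      ring
  rw [Matrix.charpoly, hmat, Matrix.det_mul, Matrix.det_mul, Matrix.det_diagonal]
  have h3 : (∏ i, (C (d i) : ℝ[X])) * (charmatrix A).det * (∏ i, (C (d i) : ℝ[X]))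
      = (charmatrix A).det * ((∏ i, (C (d i) : ℝ[X])) * ∏ i, (C (d i) : ℝ[X])) := by ring
  rw [h3, ← Finset.prod_mul_distrib]
  simp only [← C_mul, hd, C_1, Finset.prod_const_one, mul_one]
  rfl

-- aux 4: counting absolute values
lemma count_map_abs (S : Multiset ℝ) {b : ℝ} (hb : 0 < b) :
    (S.map (fun x => |x|)).count b = S.count b + S.count (-b) := by
  induction S using Multiset.induction_on with
  | empty => simp
  | cons x s ih =>
    simp only [Multiset.map_cons, Multiset.count_cons, ih]
    have hbb : b ≠ -b := by intro h; linarith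
    have key : (if b = |x| then (1 : ℕ) else 0)
        = (if b = x then 1 else 0) + (if -b = x then 1 else 0) := by
      by_cases h1 : x = b
      · subst h1
        rw [abs_of_pos hb]
        have : ¬(-x = x) := fun h => hbb (by linarith)
        simp [hbb, this]
      · by_cases h2 : x = -b
        · subst h2
          rw [abs_neg, abs_of_pos hb]
          simp [hbb, fun h : b = -b => hbb h]
        · have h3 : b ≠ |x| := by
            intro h
            rcases (abs_eq hb.le).mp h.symm with h' | h'
            · exact h1 h'
            · exact h2 h'
          have h4 : ¬(b = x) := fun h => h1 h.symm
          have h5 : ¬(-b = x) := fun h => h2 h.symm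
          simp [h3, h4, h5]
    rw [key]
    ring

-- symmetry of the eigenvalue multiset of a bipartite graph
lemma eig_count_symm {V : Type*} [Fintype V] [DecidableEq V] (G : SimpleGraph V)
    (hG : G.Colorable 2) (a : ℝ) :
    G.eigMultiset.count a = G.eigMultiset.count (-a) := by
  classical
  obtain ⟨c⟩ := hG
  set A := G.adjMat with hA
  set d : V → ℝ := fun v => if c v = 0 then 1 else -1 with hdDef
  have hd : ∀ v, d v * d v = 1 := by
    intro v
    by_cases h : c v = 0 <;> simp [hdDef, h]
  have hDAD : Matrix.diagonal d * A * Matrix.diagonal d = -A := by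
    refine Matrix.ext fun u v => ?_
    rw [Matrix.mul_diagonal, Matrix.diagonal_mul, Matrix.neg_apply]
    have hAuv : A u v = if G.Adj u v then 1 else 0 := by
      simp [hA, SimpleGraph.adjMat]
    by_cases hadj : G.Adj u v
    · have hne : c u ≠ c v := c.valid hadj
      rw [hAuv, if_pos hadj]
      have hduv : d u * d v = -1 := by
        by_cases hu : c u = 0
        · have hv : ¬ c v = 0 := fun h => hne (by rw [hu, h])
          simp [hdDef, hu, hv]
        · have hv : c v = 0 := by
            have h2 : c u = 1 := by omega
            by_contra hv
            have : c v = 1 := by omega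
            exact hne (by rw [h2, this])
          simp [hdDef, hu, hv]
      calc d u * 1 * d v = d u * d v := by ring
        _ = -1 := hduv
    · rw [hAuv, if_neg hadj]
      ring
  have hchar : (-A).charpoly = A.charpoly := by
    rw [← hDAD, charpoly_diagonal_conj d hd]
  have hne0 : A.charpoly ≠ 0 := (Matrix.charpoly_monic A).ne_zero
  have hcomp : A.charpoly.comp (-X) = C ((-1 : ℝ) ^ Fintype.card V) * A.charpoly := by
    rw [charpoly_comp_negX, hchar]
    congr 1
    simp
  have hGE : G.eigMultiset = A.charpoly.roots := rfl
  rw [hGE, Polynomial.count_roots, Polynomial.count_roots]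
  have h6 := rootMult_comp_negX A.charpoly hne0 (-a)
  rw [neg_neg] at h6
  rw [← h6, hcomp]
  have hu : ((-1 : ℝ) ^ Fintype.card V) ≠ 0 := by
    apply pow_ne_zero
    norm_num
  have h7 := Polynomial.roots_C_mul A.charpoly hu
  rw [← Polynomial.count_roots (a := -a) (p := C ((-1 : ℝ) ^ Fintype.card V) * A.charpoly), h7,
    Polynomial.count_roots]

/-- Two singularly cospectral bipartite graphs are almost cospectral. -/
theorem almostCospectral_of_bipartite_singularlyCospectral
    {V W : Type*} [Fintype V] [DecidableEq V] [Fintype W] [DecidableEq W]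
    (G : SimpleGraph V) (H : SimpleGraph W)
    (hG : G.Colorable 2) (hH : H.Colorable 2)
    (h : SingularlyCospectral G H) :
    AlmostCospectral G H := by
  classical
  unfold AlmostCospectral
  refine Multiset.ext.mpr fun a => ?_
  by_cases ha : a = 0
  · subst ha
    simp [Multiset.count_filter]
  · rw [Multiset.count_filter_of_pos (p := fun x : ℝ => x ≠ 0) ha,
      Multiset.count_filter_of_pos (p := fun x : ℝ => x ≠ 0) ha]
    have habs : (0 : ℝ) < |a| := abs_pos.mpr ha
    have hcnt := congrArg (Multiset.count |a|) h
    rw [SimpleGraph.nzSingVals, SimpleGraph.nzSingVals,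
      Multiset.count_filter_of_pos (p := fun x : ℝ => x ≠ 0) habs.ne',
      Multiset.count_filter_of_pos (p := fun x : ℝ => x ≠ 0) habs.ne',
      count_map_abs _ habs, count_map_abs _ habs,
      ← eig_count_symm G hG |a|, ← eig_count_symm H hH |a|] at hcnt
    have hmain : G.eigMultiset.count |a| = H.eigMultiset.count |a| := by omega
    have hGa : G.eigMultiset.count a = G.eigMultiset.count |a| := by
      rcases abs_choice a with h' | h'
      · rw [h']
      · rw [h']
        exact eig_count_symm G hG a
    have hHa : H.eigMultiset.count a = H.eigMultiset.count |a| := by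
      rcases abs_choice a with h' | h'
      · rw [h']
      · rw [h']
        exact eig_count_symm H hH a
    rw [hGa, hHa, hmain]
end
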